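/- arXiv:math/0007038 — 3 statements merged into one kernel-verified Lean document; each statement's English description precedes it below -/
import Mathlib

section
/- Let A be an associative unital algebra over ℚ, let T : A → A be a derivation, i.e. a ℚ-linear map with T(uv) = T(u)v + uT(v) for all u, v ∈ A, and let a be an element of the center of A. Write l_a : A → A for left multiplication by a, and for a ℚ-linear map L : A → A and a formal variable y define exp(yL) : A → A⟦y⟧ by exp(yL)(u) = Σ_{n≥0} (1/n!)Lⁿ(u)yⁿ. Then for all u, v ∈ A the following two identities hold in the formal power series ring A⟦y⟧: exp(y(l_a + T))(uv) = exp(yT)(u) · exp(y(l_a + T))(v), and exp(y(l_a + T))(uv) = exp(y(l_a + T))(u) · exp(yT)(v). -/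
/-- `exp(yS)(u) = Σ_{n≥0} (1/n!) Sⁿ(u) yⁿ`, the formal exponential series of an operator `S`
applied to `u`, as a formal power series in `y` with coefficients in `A`. -/
noncomputable def expPS {A : Type*} [Ring A] [Algebra ℚ A] (S : A → A) (u : A) :
    PowerSeries A :=
  PowerSeries.mk fun n => (n.factorial : ℚ)⁻¹ • S^[n] u

lemma iter_leibniz {A : Type*} [Ring A] (S P Q : A → A)
    (hS : ∀ x y, S (x + y) = S x + S y)
    (h : ∀ x y : A, S (x * y) = P x * y + x * Q y) (u v : A) :
    ∀ n : ℕ, S^[n] (u * v) = ∑ k ∈ Finset.range (n+1),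
      n.choose k • (P^[k] u * Q^[n-k] v) := by
  intro n
  induction n with
  | zero => simp
  | succ n ih =>
    have hS' : ∀ (s : Finset ℕ) (g : ℕ → A), S (∑ k ∈ s, g k) = ∑ k ∈ s, S (g k) :=
      fun s g => map_sum (AddMonoidHom.mk' S hS) g s
    have hSn : ∀ (m : ℕ) (x : A), S (m • x) = m • S x :=
      fun m x => map_nsmul (AddMonoidHom.mk' S hS) m x
    set f : ℕ → A := fun k => P^[k] u * Q^[n+1-k] v with hf
    have step : ∀ k ∈ Finset.range (n+1),
        S (n.choose k • (P^[k] u * Q^[n-k] v)) = n.choose k • (f (k+1) + f k) := by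
      intro k hk
      rw [Finset.mem_range] at hk
      have hk' : k ≤ n := Nat.lt_succ_iff.mp hk
      rw [hSn, h]
      congr 1
      simp only [hf]
      rw [← Function.iterate_succ_apply' P, ← Function.iterate_succ_apply' Q,
        Nat.succ_sub_succ, Nat.succ_sub hk']
    rw [Function.iterate_succ_apply', ih, hS', Finset.sum_congr rfl step]
    simp only [smul_add, Finset.sum_add_distrib]
    have e1 : ∑ k ∈ Finset.range (n+2), (n+1).choose k • f k
        = f 0 + ∑ k ∈ Finset.range (n+1), ((n.choose k + n.choose (k+1)) • f (k+1)) := by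
      rw [Finset.sum_range_succ' (fun k => (n+1).choose k • f k) (n+1)]
      simp [Nat.choose_succ_succ, add_comm]
    have e2 : ∑ k ∈ Finset.range (n+1), n.choose k • f k
        = f 0 + ∑ k ∈ Finset.range (n+1), n.choose (k+1) • f (k+1) := by
      rw [Finset.sum_range_succ' (fun k => n.choose k • f k) n,
        Finset.sum_range_succ (fun k => n.choose (k+1) • f (k+1)) n]
      simp [add_comm]
    rw [e1, e2]
    simp only [add_smul, Finset.sum_add_distrib]
    abel

lemma expPS_mul_eq {A : Type*} [Ring A] [Algebra ℚ A] (S P Q : A → A)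
    (hS : ∀ x y, S (x + y) = S x + S y)
    (h : ∀ x y : A, S (x * y) = P x * y + x * Q y) (u v : A) :
    expPS S (u * v) = expPS P u * expPS Q v := by
  ext n
  rw [PowerSeries.coeff_mul]
  simp only [expPS, PowerSeries.coeff_mk]
  rw [Finset.Nat.sum_antidiagonal_eq_sum_range_succ_mk, iter_leibniz S P Q hS h u v n,
    Finset.smul_sum]
  refine Finset.sum_congr rfl fun k hk => ?_
  rw [Finset.mem_range] at hk
  have hk' : k ≤ n := Nat.lt_succ_iff.mp hk
  rw [smul_mul_assoc, mul_smul_comm, smul_smul, ← Nat.cast_smul_eq_nsmul ℚ, smul_smul]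
  congr 1
  have hfac : ((n.choose k : ℚ)) * (k.factorial : ℚ) * ((n-k).factorial : ℚ)
      = (n.factorial : ℚ) := by
    exact_mod_cast congrArg (Nat.cast : ℕ → ℚ) (Nat.choose_mul_factorial_mul_factorial hk')
  have h1 : (k.factorial : ℚ) ≠ 0 := Nat.cast_ne_zero.mpr k.factorial_ne_zero
  have h2 : ((n-k).factorial : ℚ) ≠ 0 := Nat.cast_ne_zero.mpr (n-k).factorial_ne_zero
  have h3 : (n.factorial : ℚ) ≠ 0 := Nat.cast_ne_zero.mpr n.factorial_ne_zero
  field_simp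
  linear_combination hfac

/-- generalized automorphism property: if `T` is a derivation of an
associative unital `ℚ`-algebra `A` and `a` is a central element, then, writing `l_a` for left
multiplication by `a`, one has `exp(y(l_a + T))(uv) = exp(yT)(u) · exp(y(l_a + T))(v)` and
`exp(y(l_a + T))(uv) = exp(y(l_a + T))(u) · exp(yT)(v)` in `A⟦y⟧`. -/
theorem statement1 {A : Type*} [Ring A] [Algebra ℚ A] (T : A →ₗ[ℚ] A)
    (hT : ∀ u v : A, T (u * v) = T u * v + u * T v)
    (a : A) (ha : ∀ r : A, a * r = r * a) (u v : A) :
    expPS (fun w => a * w + T w) (u * v) =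
        expPS (⇑T) u * expPS (fun w => a * w + T w) v ∧
      expPS (fun w => a * w + T w) (u * v) =
        expPS (fun w => a * w + T w) u * expPS (⇑T) v := by
  set S : A → A := fun w => a * w + T w with hSdef
  have hS : ∀ x y, S (x + y) = S x + S y := by
    intro x y
    simp only [hSdef, mul_add, map_add]
    abel
  constructor
  · refine expPS_mul_eq S (⇑T) S hS (fun x y => ?_) u v
    simp only [hSdef, hT]
    have : a * (x * y) = x * (a * y) := by
      rw [← mul_assoc, ha x, mul_assoc]
    rw [this]; noncomm_ring
  · refine expPS_mul_eq S S (⇑T) hS (fun x y => ?_) u v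
    simp only [hSdef, hT]
    noncomm_ring
end

section
/- Let R be a supercommutative superalgebra over ℚ, and let R((x))[φ] be the superalgebra of formal Laurent series in the even variable x (finitely many negative powers) together with the odd variable φ. Given sequences (A_j)_{j≥1} in R⁰ and (M_{j−1/2})_{j≥1} in R¹, let T = −Σ_{j≥1}(A_j L_j(x,φ) + M_{j−1/2} G_{j−1/2}(x,φ)) act on R((x))[φ] (see context); exp(T)(u) = Σ_{n≥0}Tⁿ(u)/n! is coefficientwise well defined for every u ∈ R((x))[φ]. Then for all u, v ∈ R((x))[φ]: exp(T)(uv) = exp(T)(u) · exp(T)(v). (That is, the automorphism property holds for this operator with the formal variable y set equal to 1.) -/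
/- A supercommutative superalgebra over `ℚ` is encoded as a `ℚ`-algebra `R` together with its
grading involution `σ : R →+* R` (`σ = id` on `R⁰`, `σ = −id` on `R¹`; over `ℚ` the data of
the direct sum decomposition `R = R⁰ ⊕ R¹` is equivalent to that of `σ`), with
supercommutativity expressed by: even elements are central, and odd elements anticommute.

An element `a + φb` of `R((x))[φ]` is encoded as the pair `(a, b)` of its coefficient
functions `ℤ → R`; membership in `R((x))` corresponds to the support being bounded below. -/

noncomputable section

/-- Elements `a + φ b` of `R((x))[φ]`, encoded as pairs of coefficient functions. -/
abbrev SLS (R : Type*) := (ℤ → R) × (ℤ → R)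

variable {R : Type*} [Ring R] [Algebra ℚ R]

/-- Support bounded below: finitely many negative powers of `x`. -/
def SuppBddBelow (a : ℤ → R) : Prop := ∃ N : ℤ, ∀ n : ℤ, n < N → a n = 0

/-- Convolution product of coefficient functions. -/
def conv (a b : ℤ → R) : ℤ → R := fun n => ∑ᶠ k : ℤ, a k * b (n - k)

/-- The product `(a + φb)(c + φd) = ac + φ(σ(a)d + bc)` of `R((x))[φ]`. -/
def slsMul (σ : R →+* R) (u v : SLS R) : SLS R :=
  (conv u.1 v.1, conv (fun k => σ (u.1 k)) v.2 + conv u.2 v.1)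

/-- The operator `T = −Σ_{j≥1}(A_j L_j(x,φ) + M_{j−1/2} G_{j−1/2}(x,φ))`, concretely
`T(a, b) = (Σ_{j≥1} A_j x^(j+1) a′ + Σ_{j≥1} M_{j−1/2} xʲ b,
Σ_{j≥1} A_j (x^(j+1) b′ + ((j+1)/2) xʲ b) + Σ_{j≥1} M_{j−1/2} xʲ a′)`, written
coefficientwise (the summation index is shifted so that `j + 1` ranges over `j ≥ 1`;
`M j` stands for `M_{j−1/2}`). -/
def slsT (A M : ℕ → R) (u : SLS R) : SLS R :=
  (fun n => ∑ᶠ j : ℕ,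
      (A (j + 1) * ((n - ((j : ℤ) + 1)) • u.1 (n - ((j : ℤ) + 1)))
        + M (j + 1) * u.2 (n - ((j : ℤ) + 1))),
   fun n => ∑ᶠ j : ℕ,
      (A (j + 1) * ((n - ((j : ℤ) + 1)) • u.2 (n - ((j : ℤ) + 1))
          + (((j : ℚ) + 2) / 2) • u.2 (n - ((j : ℤ) + 1)))
        + M (j + 1) * ((n - (j : ℤ)) • u.1 (n - (j : ℤ)))))

/-- `exp(T)(u) = Σ_{k≥0} Tᵏ(u)/k!`, coefficientwise. -/
def slsExp (A M : ℕ → R) (u : SLS R) : SLS R :=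
  (fun n => ∑ᶠ k : ℕ, (k.factorial : ℚ)⁻¹ • (((slsT A M)^[k]) u).1 n,
   fun n => ∑ᶠ k : ℕ, (k.factorial : ℚ)⁻¹ • (((slsT A M)^[k]) u).2 n)

/-! ### Auxiliary material -/

open Finset

namespace Stmt3Aux
set_option linter.unusedSectionVars false

instance : NoZeroSMulDivisors ℚ R := inferInstance

/-- Two finset sums agree if the function vanishes off each. -/
lemma sum_congr_zero {M : Type*} [AddCommMonoid M] (s t : Finset ℤ) (f : ℤ → M)
    (h1 : ∀ k ∈ s, k ∉ t → f k = 0) (h2 : ∀ k ∈ t, k ∉ s → f k = 0) :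
    ∑ k ∈ s, f k = ∑ k ∈ t, f k := by
  refine (Finset.sum_subset (Finset.subset_union_left (s₁ := s) (s₂ := t))
      (fun x hx hxs => h2 x ((Finset.mem_union.1 hx).resolve_left hxs) hxs)).trans
    (Finset.sum_subset (Finset.subset_union_right (s₁ := s) (s₂ := t))
      (fun x hx hxt => h1 x ((Finset.mem_union.1 hx).resolve_right hxt) hxt)).symm

lemma sum_Icc_shift {M : Type*} [AddCommMonoid M] (f : ℤ → M) (a b c : ℤ) :
    ∑ k ∈ Icc a b, f k = ∑ k ∈ Icc (a + c) (b + c), f (k - c) := by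
  rw [← Finset.map_add_right_Icc, Finset.sum_map]
  simp [addRightEmbedding]

lemma finsum_eq_sum_Icc {M : Type*} [AddCommMonoid M] (f : ℤ → M) (a b : ℤ)
    (h : ∀ k, k ∉ Icc a b → f k = 0) : ∑ᶠ k, f k = ∑ k ∈ Icc a b, f k := by
  refine finsum_eq_finset_sum_of_support_subset f ?_
  intro k hk
  simp only [Finset.coe_Icc, Set.mem_Icc]
  by_contra hc
  exact hk (h k (by simpa [Finset.mem_Icc] using hc))

lemma finsum_eq_sum_range {M : Type*} [AddCommMonoid M] (f : ℕ → M) (J : ℕ)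
    (h : ∀ k, J ≤ k → f k = 0) : ∑ᶠ k, f k = ∑ k ∈ range J, f k := by
  refine finsum_eq_finset_sum_of_support_subset f ?_
  intro k hk
  simp only [Finset.coe_range, Set.mem_Iio]
  by_contra hc
  exact hk (h k (le_of_not_gt hc))

section parity

variable (σ : R →+* R) (hσ : ∀ r : R, σ (σ r) = r)
  (hcomm : ∀ u v : R, σ u = u → u * v = v * u)
  (hanti : ∀ u v : R, σ u = -u → σ v = -v → u * v = -(v * u))

include hσ hcomm hanti in
/-- Any element moves past an odd element at the cost of applying `σ`. -/
lemma odd_move {w : R} (hw : σ w = -w) (r : R) : r * w = w * σ r := by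
  set e : R := (2⁻¹ : ℚ) • (r + σ r) with he
  set o : R := (2⁻¹ : ℚ) • (r - σ r) with ho
  have hre : r = e + o := by
    rw [he, ho, ← smul_add]
    have : r + σ r + (r - σ r) = (2 : ℚ) • r := by
      rw [two_smul]; abel
    rw [this, smul_smul]; norm_num
  have hσe : σ e = e := by
    rw [he, map_rat_smul σ, map_add, hσ, add_comm]
  have hσo : σ o = -o := by
    rw [ho, map_rat_smul σ, map_sub, hσ, ← smul_neg, neg_sub]
  have hσr : σ r = e - o := by
    rw [hre, map_add, hσe, hσo]; abel
  rw [hσr, hre, add_mul, hcomm e w hσe, hanti o w hσo hw, mul_sub]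
  abel

omit [Algebra ℚ R] in
include hcomm in
lemma central_shift {e : R} (he : σ e = e) (x y : R) : x * (e * y) = e * (x * y) := by
  rw [← mul_assoc, ← hcomm e x he, mul_assoc]

include hσ hcomm hanti in
lemma odd_shift {w : R} (hw : σ w = -w) (x y : R) : x * (w * y) = w * (σ x * y) := by
  rw [← mul_assoc, odd_move σ hσ hcomm hanti hw x, mul_assoc]

end parity


section bdd

variable (A M : ℕ → R)

/-- Both coefficient functions vanish below `N`. -/
def BddP (w : SLS R) (N : ℤ) : Prop :=
  (∀ m : ℤ, m < N → w.1 m = 0) ∧ (∀ m : ℤ, m < N → w.2 m = 0)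

/-- Order (in half-integer units, doubled) at least `d`. -/
def OrdP (w : SLS R) (d : ℤ) : Prop :=
  (∀ m : ℤ, 2 * m < d → w.1 m = 0) ∧ (∀ m : ℤ, 2 * m + 1 < d → w.2 m = 0)

omit [Algebra ℚ R] in
lemma BddP.ord {w : SLS R} {N : ℤ} (h : BddP w N) : OrdP w (2 * N) :=
  ⟨fun m hm => h.1 m (by omega), fun m hm => h.2 m (by omega)⟩

omit [Algebra ℚ R] in
lemma conv_eq_sum {a b : ℤ → R} {N₁ N₂ : ℤ} (ha : ∀ m, m < N₁ → a m = 0)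
    (hb : ∀ m, m < N₂ → b m = 0) (n : ℤ) {lo hi : ℤ} (hlo : lo ≤ N₁) (hhi : n - N₂ ≤ hi) :
    conv a b n = ∑ k ∈ Icc lo hi, a k * b (n - k) := by
  refine finsum_eq_sum_Icc _ _ _ (fun k hk => ?_)
  rcases (by rw [Finset.mem_Icc] at hk; omega : k < N₁ ∨ n - k < N₂) with h | h
  · rw [ha k h, zero_mul]
  · rw [hb _ h, mul_zero]

lemma slsT_fst_eq_sum {w : SLS R} {N : ℤ} (hw : BddP w N) (n : ℤ) {J : ℕ}
    (hJ : n - N ≤ (J : ℤ)) :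
    (slsT A M w).1 n = ∑ j ∈ range J,
      (A (j + 1) * ((n - ((j : ℤ) + 1)) • w.1 (n - ((j : ℤ) + 1)))
        + M (j + 1) * w.2 (n - ((j : ℤ) + 1))) := by
  refine finsum_eq_sum_range _ _ (fun j hj => ?_)
  have h : n - ((j : ℤ) + 1) < N := by
    have : (J : ℤ) ≤ (j : ℤ) := by exact_mod_cast hj
    omega
  rw [hw.1 _ h, hw.2 _ h, smul_zero, mul_zero, mul_zero, add_zero]

lemma slsT_snd_eq_sum {w : SLS R} {N : ℤ} (hw : BddP w N) (n : ℤ) {J : ℕ}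
    (hJ : n - N + 1 ≤ (J : ℤ)) :
    (slsT A M w).2 n = ∑ j ∈ range J,
      (A (j + 1) * ((n - ((j : ℤ) + 1)) • w.2 (n - ((j : ℤ) + 1))
          + (((j : ℚ) + 2) / 2) • w.2 (n - ((j : ℤ) + 1)))
        + M (j + 1) * ((n - (j : ℤ)) • w.1 (n - (j : ℤ)))) := by
  refine finsum_eq_sum_range _ _ (fun j hj => ?_)
  have hj' : (J : ℤ) ≤ (j : ℤ) := by exact_mod_cast hj
  have h1 : n - ((j : ℤ) + 1) < N := by omega
  have h2 : n - (j : ℤ) < N := by omega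
  rw [hw.2 _ h1, hw.1 _ h2, smul_zero, smul_zero, smul_zero, add_zero, mul_zero, mul_zero,
    add_zero]

lemma BddP.T {w : SLS R} {N : ℤ} (hw : BddP w N) : BddP (slsT A M w) N := by
  constructor
  · intro m hm
    refine finsum_eq_zero_of_forall_eq_zero (fun j => ?_)
    have h : m - ((j : ℤ) + 1) < N := by omega
    rw [hw.1 _ h, hw.2 _ h, smul_zero, mul_zero, mul_zero, add_zero]
  · intro m hm
    refine finsum_eq_zero_of_forall_eq_zero (fun j => ?_)
    have h1 : m - ((j : ℤ) + 1) < N := by omega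
    have h2 : m - (j : ℤ) < N := by omega
    rw [hw.2 _ h1, hw.1 _ h2, smul_zero, smul_zero, smul_zero, add_zero, mul_zero, mul_zero,
      add_zero]

lemma OrdP.T {w : SLS R} {d : ℤ} (hw : OrdP w d) : OrdP (slsT A M w) (d + 1) := by
  constructor
  · intro m hm
    refine finsum_eq_zero_of_forall_eq_zero (fun j => ?_)
    have h1 : 2 * (m - ((j : ℤ) + 1)) < d := by have : (0:ℤ) ≤ j := Int.natCast_nonneg j; omega
    have h2 : 2 * (m - ((j : ℤ) + 1)) + 1 < d := by
      have : (0:ℤ) ≤ j := Int.natCast_nonneg j; omega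
    rw [hw.1 _ h1, hw.2 _ h2, smul_zero, mul_zero, mul_zero, add_zero]
  · intro m hm
    refine finsum_eq_zero_of_forall_eq_zero (fun j => ?_)
    have h1 : 2 * (m - ((j : ℤ) + 1)) + 1 < d := by
      have : (0:ℤ) ≤ j := Int.natCast_nonneg j; omega
    have h2 : 2 * (m - (j : ℤ)) < d := by have : (0:ℤ) ≤ j := Int.natCast_nonneg j; omega
    rw [hw.2 _ h1, hw.1 _ h2, smul_zero, smul_zero, smul_zero, add_zero, mul_zero, mul_zero,
      add_zero]

lemma BddP.iter {w : SLS R} {N : ℤ} (hw : BddP w N) (k : ℕ) :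
    BddP ((slsT A M)^[k] w) N := by
  induction k with
  | zero => exact hw
  | succ k ih => rw [Function.iterate_succ_apply']; exact ih.T A M

lemma OrdP.iter {w : SLS R} {d : ℤ} (hw : OrdP w d) (k : ℕ) :
    OrdP ((slsT A M)^[k] w) (d + k) := by
  induction k with
  | zero => simpa using hw
  | succ k ih =>
      rw [Function.iterate_succ_apply']
      have := ih.T A M
      have he : d + (k:ℤ) + 1 = d + ((k:ℕ)+1 : ℕ) := by push_cast; ring
      rwa [he] at this

lemma BddP.mul (σ : R →+* R) {u v : SLS R} {N₁ N₂ : ℤ} (hu : BddP u N₁) (hv : BddP v N₂) :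
    BddP (slsMul σ u v) (N₁ + N₂) := by
  constructor
  · intro m hm
    refine finsum_eq_zero_of_forall_eq_zero (fun k => ?_)
    rcases (by omega : k < N₁ ∨ m - k < N₂) with h | h
    · rw [hu.1 _ h, zero_mul]
    · rw [hv.1 _ h, mul_zero]
  · intro m hm
    have h1 : conv (fun k => σ (u.1 k)) v.2 m = 0 := by
      refine finsum_eq_zero_of_forall_eq_zero (fun k => ?_)
      rcases (by omega : k < N₁ ∨ m - k < N₂) with h | h
      · show σ (u.1 k) * _ = 0
        rw [hu.1 _ h, map_zero, zero_mul]
      · rw [hv.2 _ h, mul_zero]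
    have h2 : conv u.2 v.1 m = 0 := by
      refine finsum_eq_zero_of_forall_eq_zero (fun k => ?_)
      rcases (by omega : k < N₁ ∨ m - k < N₂) with h | h
      · rw [hu.2 _ h, zero_mul]
      · rw [hv.1 _ h, mul_zero]
    show conv (fun k => σ (u.1 k)) v.2 m + conv u.2 v.1 m = 0
    rw [h1, h2, add_zero]

lemma OrdP.mul (σ : R →+* R) {u v : SLS R} {d e : ℤ} (hu : OrdP u d) (hv : OrdP v e) :
    OrdP (slsMul σ u v) (d + e) := by
  constructor
  · intro m hm
    refine finsum_eq_zero_of_forall_eq_zero (fun k => ?_)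
    rcases (by omega : 2 * k < d ∨ 2 * (m - k) < e) with h | h
    · rw [hu.1 _ h, zero_mul]
    · rw [hv.1 _ h, mul_zero]
  · intro m hm
    have h1 : conv (fun k => σ (u.1 k)) v.2 m = 0 := by
      refine finsum_eq_zero_of_forall_eq_zero (fun k => ?_)
      rcases (by omega : 2 * k < d ∨ 2 * (m - k) + 1 < e) with h | h
      · show σ (u.1 k) * _ = 0
        rw [hu.1 _ h, map_zero, zero_mul]
      · rw [hv.2 _ h, mul_zero]
    have h2 : conv u.2 v.1 m = 0 := by
      refine finsum_eq_zero_of_forall_eq_zero (fun k => ?_)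
      rcases (by omega : 2 * k + 1 < d ∨ 2 * (m - k) < e) with h | h
      · rw [hu.2 _ h, zero_mul]
      · rw [hv.1 _ h, mul_zero]
    show conv (fun k => σ (u.1 k)) v.2 m + conv u.2 v.1 m = 0
    rw [h1, h2, add_zero]

end bdd


section linear

variable (A M : ℕ → R)

lemma BddP.mono {w : SLS R} {N N' : ℤ} (h : BddP w N) (hle : N' ≤ N) : BddP w N' :=
  ⟨fun m hm => h.1 m (by omega), fun m hm => h.2 m (by omega)⟩

lemma BddP.zero (N : ℤ) : BddP (0 : SLS R) N := ⟨fun _ _ => rfl, fun _ _ => rfl⟩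

lemma BddP.add {w z : SLS R} {N : ℤ} (hw : BddP w N) (hz : BddP z N) : BddP (w + z) N := by
  refine ⟨fun m hm => ?_, fun m hm => ?_⟩
  · show w.1 m + z.1 m = 0
    rw [hw.1 m hm, hz.1 m hm, add_zero]
  · show w.2 m + z.2 m = 0
    rw [hw.2 m hm, hz.2 m hm, add_zero]

lemma BddP.smul {w : SLS R} {N : ℤ} (c : ℚ) (hw : BddP w N) : BddP (c • w) N := by
  refine ⟨fun m hm => ?_, fun m hm => ?_⟩
  · show c • w.1 m = 0
    rw [hw.1 m hm, smul_zero]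
  · show c • w.2 m = 0
    rw [hw.2 m hm, smul_zero]

lemma BddP.sum {ι : Type*} (s : Finset ι) (w : ι → SLS R) (N : ℤ)
    (h : ∀ i ∈ s, BddP (w i) N) : BddP (∑ i ∈ s, w i) N := by
  classical
  induction s using Finset.induction_on with
  | empty => simpa using BddP.zero N
  | @insert a s' ha ih =>
      rw [Finset.sum_insert ha]
      exact (h _ (Finset.mem_insert_self _ _)).add
        (ih (fun i hi => h i (Finset.mem_insert_of_mem hi)))

lemma slsT_zero : slsT A M (0 : SLS R) = 0 := by
  refine Prod.ext (funext fun n => ?_) (funext fun n => ?_) <;>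
    exact finsum_eq_zero_of_forall_eq_zero (fun j => by
      show _ = (0:R)
      simp)

lemma slsT_add {w z : SLS R} {N₁ N₂ : ℤ} (hw : BddP w N₁) (hz : BddP z N₂) :
    slsT A M (w + z) = slsT A M w + slsT A M z := by
  set N := min N₁ N₂ with hN
  have hw' : BddP w N := hw.mono (min_le_left _ _)
  have hz' : BddP z N := hz.mono (min_le_right _ _)
  have hs : BddP (w + z) N := hw'.add hz'
  refine Prod.ext (funext fun n => ?_) (funext fun n => ?_)
  · have hJ : n - N ≤ (((n - N).toNat : ℕ) : ℤ) := Int.self_le_toNat _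
    show (slsT A M (w + z)).1 n = (slsT A M w).1 n + (slsT A M z).1 n
    rw [slsT_fst_eq_sum A M hs n hJ, slsT_fst_eq_sum A M hw' n hJ,
      slsT_fst_eq_sum A M hz' n hJ, ← Finset.sum_add_distrib]
    refine Finset.sum_congr rfl (fun j _ => ?_)
    show A (j+1) * (_ • (w.1 _ + z.1 _)) + M (j+1) * (w.2 _ + z.2 _) = _
    rw [smul_add, mul_add, mul_add]
    abel
  · have hJ : n - N + 1 ≤ (((n - N + 1).toNat : ℕ) : ℤ) := Int.self_le_toNat _
    show (slsT A M (w + z)).2 n = (slsT A M w).2 n + (slsT A M z).2 n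
    rw [slsT_snd_eq_sum A M hs n hJ, slsT_snd_eq_sum A M hw' n hJ,
      slsT_snd_eq_sum A M hz' n hJ, ← Finset.sum_add_distrib]
    refine Finset.sum_congr rfl (fun j _ => ?_)
    show A (j+1) * (_ • (w.2 _ + z.2 _) + _ • (w.2 _ + z.2 _))
        + M (j+1) * (_ • (w.1 _ + z.1 _)) = _
    simp only [smul_add, mul_add]
    abel

lemma slsT_smul (c : ℚ) (w : SLS R) : slsT A M (c • w) = c • slsT A M w := by
  refine Prod.ext (funext fun n => ?_) (funext fun n => ?_)
  · show (slsT A M (c • w)).1 n = c • (slsT A M w).1 n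
    calc (slsT A M (c • w)).1 n
        = ∑ᶠ j : ℕ, c • (A (j + 1) * ((n - ((j : ℤ) + 1)) • w.1 (n - ((j : ℤ) + 1)))
            + M (j + 1) * w.2 (n - ((j : ℤ) + 1))) := by
          refine finsum_congr (fun j => ?_)
          show A (j+1) * (_ • (c • w.1 _)) + M (j+1) * (c • w.2 _) = _
          rw [smul_comm _ c, mul_smul_comm, mul_smul_comm, mul_smul_comm, smul_add]
      _ = c • (slsT A M w).1 n := (smul_finsum c _).symm
  · show (slsT A M (c • w)).2 n = c • (slsT A M w).2 n
    calc (slsT A M (c • w)).2 n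
        = ∑ᶠ j : ℕ, c • (A (j + 1) * ((n - ((j : ℤ) + 1)) • w.2 (n - ((j : ℤ) + 1))
              + (((j : ℚ) + 2) / 2) • w.2 (n - ((j : ℤ) + 1)))
            + M (j + 1) * ((n - (j : ℤ)) • w.1 (n - (j : ℤ)))) := by
          refine finsum_congr (fun j => ?_)
          show A (j+1) * (_ • (c • w.2 _) + _ • (c • w.2 _)) + M (j+1) * (_ • (c • w.1 _)) = _
          rw [smul_comm _ c, smul_comm (((j:ℚ)+2)/2) c, smul_comm _ c, ← smul_add,
            mul_smul_comm, mul_smul_comm, smul_add]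
      _ = c • (slsT A M w).2 n := (smul_finsum c _).symm

lemma slsT_sum {ι : Type*} (s : Finset ι) (w : ι → SLS R) (N : ℤ)
    (h : ∀ i ∈ s, BddP (w i) N) :
    slsT A M (∑ i ∈ s, w i) = ∑ i ∈ s, slsT A M (w i) := by
  classical
  induction s using Finset.induction_on with
  | empty => simpa using slsT_zero A M
  | @insert a s' ha ih =>
      rw [Finset.sum_insert ha, Finset.sum_insert ha,
        slsT_add A M (h _ (Finset.mem_insert_self _ _))
          (BddP.sum s' w N (fun i hi => h i (Finset.mem_insert_of_mem hi))),
        ih (fun i hi => h i (Finset.mem_insert_of_mem hi))]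

lemma slsExp_fst_eq_sum {w : SLS R} {d : ℤ} (hw : OrdP w d) (n : ℤ) {K : ℕ}
    (hK : 2 * n - d < (K : ℤ)) :
    (slsExp A M w).1 n = ∑ k ∈ range K, (k.factorial : ℚ)⁻¹ • ((slsT A M)^[k] w).1 n := by
  refine finsum_eq_sum_range _ _ (fun k hk => ?_)
  have : 2 * n < d + (k : ℤ) := by
    have : (K : ℤ) ≤ (k : ℤ) := by exact_mod_cast hk
    omega
  rw [(hw.iter A M k).1 n this, smul_zero]

lemma slsExp_snd_eq_sum {w : SLS R} {d : ℤ} (hw : OrdP w d) (n : ℤ) {K : ℕ}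
    (hK : 2 * n + 1 - d < (K : ℤ)) :
    (slsExp A M w).2 n = ∑ k ∈ range K, (k.factorial : ℚ)⁻¹ • ((slsT A M)^[k] w).2 n := by
  refine finsum_eq_sum_range _ _ (fun k hk => ?_)
  have : 2 * n + 1 < d + (k : ℤ) := by
    have : (K : ℤ) ≤ (k : ℤ) := by exact_mod_cast hk
    omega
  rw [(hw.iter A M k).2 n this, smul_zero]

lemma BddP.exp {w : SLS R} {N : ℤ} (hw : BddP w N) : BddP (slsExp A M w) N := by
  refine ⟨fun m hm => ?_, fun m hm => ?_⟩
  · exact finsum_eq_zero_of_forall_eq_zero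
      (fun k => by rw [(hw.iter A M k).1 m hm, smul_zero])
  · exact finsum_eq_zero_of_forall_eq_zero
      (fun k => by rw [(hw.iter A M k).2 m hm, smul_zero])

/-- Shift the convolution variable by `s ≥ 0` and renormalise the range. -/
lemma shift_reindex (f g : ℤ → R) (N n s : ℤ) (hs : 0 ≤ s)
    (hf : ∀ k, k < N → f k = 0) (hg : ∀ k, k < N → g k = 0) :
    ∑ k ∈ Icc N (n - N), f (k - s) * g (n - k)
      = ∑ k ∈ Icc N (n - N), f k * g (n - s - k) := by
  rw [sum_Icc_shift (fun k => f (k - s) * g (n - k)) N (n - N) (-s)]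
  rw [Finset.sum_congr rfl (fun k _ => by
    rw [show k - -s - s = k by ring, show n - (k - -s) = n - s - k by ring])]
  refine sum_congr_zero _ _ _ (fun k hk hk' => ?_) (fun k hk hk' => ?_)
  · rw [Finset.mem_Icc] at hk
    rw [Finset.mem_Icc] at hk'
    have : k < N := by omega
    rw [hf k this, zero_mul]
  · rw [Finset.mem_Icc] at hk
    rw [Finset.mem_Icc] at hk'
    have : n - s - k < N := by omega
    rw [hg _ this, mul_zero]

end linear


section deriv

variable (σ : R →+* R) (hσ : ∀ r : R, σ (σ r) = r)
  (hcomm : ∀ u v : R, σ u = u → u * v = v * u)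
  (hanti : ∀ u v : R, σ u = -u → σ v = -v → u * v = -(v * u))
  (A M : ℕ → R) (hA : ∀ j, σ (A j) = A j) (hM : ∀ j, σ (M j) = -(M j))

include hσ hcomm hanti hA hM in
/-- `T` is a derivation for the product of `R((x))[φ]`. -/
lemma slsT_mul {u v : SLS R} {N : ℤ} (hu : BddP u N) (hv : BddP v N) :
    slsT A M (slsMul σ u v) = slsMul σ (slsT A M u) v + slsMul σ u (slsT A M v) := by
  have huv : BddP (slsMul σ u v) (N + N) := hu.mul σ hv
  have hTu : BddP (slsT A M u) N := hu.T A M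
  have hTv : BddP (slsT A M v) N := hv.T A M
  have hσu1 : ∀ m : ℤ, m < N → σ (u.1 m) = 0 := fun m hm => by rw [hu.1 m hm, map_zero]
  have hσu2 : ∀ m : ℤ, m < N → σ (u.2 m) = 0 := fun m hm => by rw [hu.2 m hm, map_zero]
  refine Prod.ext (funext fun n => ?_) (funext fun n => ?_)
  case _ =>
    set J : ℕ := (n - 2 * N + 1).toNat with hJdef
    have hJ : n - 2 * N + 1 ≤ (J : ℤ) := Int.self_le_toNat _
    set S : Finset ℤ := Icc N (n - N) with hSdef
    show (slsT A M (slsMul σ u v)).1 n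
      = (slsMul σ (slsT A M u) v).1 n + (slsMul σ u (slsT A M v)).1 n
    -- LHS
    have lhs_eq : (slsT A M (slsMul σ u v)).1 n
        = ∑ j ∈ range J, ∑ k ∈ S,
            (A (j+1) * ((n - ((j:ℤ)+1)) • (u.1 k * v.1 (n - ((j:ℤ)+1) - k)))
              + M (j+1) * (σ (u.1 k) * v.2 (n - ((j:ℤ)+1) - k)
                  + u.2 k * v.1 (n - ((j:ℤ)+1) - k))) := by
      rw [slsT_fst_eq_sum A M huv n (J := J) (by omega)]
      refine Finset.sum_congr rfl fun j hj => ?_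
      have e1 : (slsMul σ u v).1 (n - ((j:ℤ)+1))
          = ∑ k ∈ S, u.1 k * v.1 (n - ((j:ℤ)+1) - k) :=
        conv_eq_sum hu.1 hv.1 _ le_rfl (by omega)
      have e2 : (slsMul σ u v).2 (n - ((j:ℤ)+1))
          = ∑ k ∈ S, (σ (u.1 k) * v.2 (n - ((j:ℤ)+1) - k)
              + u.2 k * v.1 (n - ((j:ℤ)+1) - k)) := by
        show conv (fun k => σ (u.1 k)) v.2 _ + conv u.2 v.1 _ = _
        rw [conv_eq_sum hσu1 hv.2 _ (lo := N) (hi := n - N) le_rfl (by omega),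
          conv_eq_sum hu.2 hv.1 _ (lo := N) (hi := n - N) le_rfl (by omega),
          ← Finset.sum_add_distrib]
      rw [e1, e2, Finset.smul_sum, Finset.mul_sum, Finset.mul_sum, ← Finset.sum_add_distrib]
    -- RHS first term
    have rhs1_eq : (slsMul σ (slsT A M u) v).1 n
        = ∑ j ∈ range J, ∑ k ∈ S,
            (A (j+1) * (k • u.1 k) + M (j+1) * u.2 k) * v.1 (n - ((j:ℤ)+1) - k) := by
      show conv (slsT A M u).1 v.1 n = _
      rw [conv_eq_sum hTu.1 hv.1 n le_rfl le_rfl]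
      rw [Finset.sum_congr rfl (fun k hk => by
        rw [slsT_fst_eq_sum A M hu k (J := J) (by simp only [hSdef, Finset.mem_Icc] at hk; omega),
          Finset.sum_mul])]
      rw [Finset.sum_comm]
      refine Finset.sum_congr rfl fun j hj => ?_
      exact shift_reindex (fun k => A (j+1) * (k • u.1 k) + M (j+1) * u.2 k) v.1 N n
        ((j:ℤ)+1) (by omega)
        (fun k hk => by
          show A (j+1) * (k • u.1 k) + M (j+1) * u.2 k = 0
          rw [hu.1 k hk, hu.2 k hk, smul_zero, mul_zero, mul_zero, add_zero])
        hv.1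
    -- RHS second term
    have rhs2_eq : (slsMul σ u (slsT A M v)).1 n
        = ∑ j ∈ range J, ∑ k ∈ S,
            u.1 k * (A (j+1) * ((n - ((j:ℤ)+1) - k) • v.1 (n - ((j:ℤ)+1) - k))
              + M (j+1) * v.2 (n - ((j:ℤ)+1) - k)) := by
      show conv u.1 (slsT A M v).1 n = _
      rw [conv_eq_sum hu.1 hTv.1 n le_rfl le_rfl]
      rw [Finset.sum_congr rfl (fun k hk => by
        rw [slsT_fst_eq_sum A M hv (n - k) (J := J) (by simp only [hSdef, Finset.mem_Icc] at hk; omega),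
          Finset.mul_sum])]
      rw [Finset.sum_comm]
      refine Finset.sum_congr rfl fun j hj => Finset.sum_congr rfl fun k hk => ?_
      rw [show n - k - ((j:ℤ)+1) = n - ((j:ℤ)+1) - k by ring]
    rw [lhs_eq, rhs1_eq, rhs2_eq, ← Finset.sum_add_distrib]
    refine Finset.sum_congr rfl fun j hj => ?_
    rw [← Finset.sum_add_distrib]
    refine Finset.sum_congr rfl fun k hk => ?_
    generalize hm : n - ((j:ℤ)+1) - k = m
    rw [show n - ((j:ℤ)+1) = k + m from by omega, add_smul, mul_add, mul_add, add_mul,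
      mul_add, central_shift σ hcomm (hA (j+1)), odd_shift σ hσ hcomm hanti (hM (j+1)),
      mul_assoc (A (j+1)), mul_assoc (M (j+1)), smul_mul_assoc, mul_smul_comm]
    rw [mul_smul_comm m (u.1 k) (v.1 m)]
    abel
  case _ =>
    set J : ℕ := (n - 2 * N + 1).toNat with hJdef
    have hJ : n - 2 * N + 1 ≤ (J : ℤ) := Int.self_le_toNat _
    set S : Finset ℤ := Icc N (n - N) with hSdef
    show (slsT A M (slsMul σ u v)).2 n
      = (slsMul σ (slsT A M u) v).2 n + (slsMul σ u (slsT A M v)).2 n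
    have cs := central_shift σ hcomm (hA (_root_.id 0))
    -- LHS
    have lhs_eq : (slsT A M (slsMul σ u v)).2 n
        = ∑ j ∈ range J, ∑ k ∈ S,
            (A (j+1) * ((n - ((j:ℤ)+1)) • (σ (u.1 k) * v.2 (n - ((j:ℤ)+1) - k)
                  + u.2 k * v.1 (n - ((j:ℤ)+1) - k))
                + (((j:ℚ)+2)/2) • (σ (u.1 k) * v.2 (n - ((j:ℤ)+1) - k)
                  + u.2 k * v.1 (n - ((j:ℤ)+1) - k)))
              + M (j+1) * ((n - (j:ℤ)) • (u.1 k * v.1 (n - (j:ℤ) - k)))) := by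
      rw [slsT_snd_eq_sum A M huv n (J := J) (by omega)]
      refine Finset.sum_congr rfl fun j hj => ?_
      have e1 : (slsMul σ u v).1 (n - (j:ℤ))
          = ∑ k ∈ S, u.1 k * v.1 (n - (j:ℤ) - k) :=
        conv_eq_sum hu.1 hv.1 _ le_rfl (by omega)
      have e2 : (slsMul σ u v).2 (n - ((j:ℤ)+1))
          = ∑ k ∈ S, (σ (u.1 k) * v.2 (n - ((j:ℤ)+1) - k)
              + u.2 k * v.1 (n - ((j:ℤ)+1) - k)) := by
        show conv (fun k => σ (u.1 k)) v.2 _ + conv u.2 v.1 _ = _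
        rw [conv_eq_sum hσu1 hv.2 _ (lo := N) (hi := n - N) le_rfl (by omega),
          conv_eq_sum hu.2 hv.1 _ (lo := N) (hi := n - N) le_rfl (by omega),
          ← Finset.sum_add_distrib]
      rw [e1, e2, Finset.smul_sum, Finset.smul_sum, Finset.smul_sum,
        ← Finset.sum_add_distrib, Finset.mul_sum, Finset.mul_sum, ← Finset.sum_add_distrib]
    -- RHS pieces
    have hσTu1 : ∀ m : ℤ, m < N → σ ((slsT A M u).1 m) = 0 := fun m hm => by
      rw [hTu.1 m hm, map_zero]
    have hP1 : conv (fun k => σ ((slsT A M u).1 k)) v.2 n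
        = ∑ j ∈ range J, ∑ k ∈ S,
            (A (j+1) * (k • σ (u.1 k)) + -(M (j+1) * σ (u.2 k)))
              * v.2 (n - ((j:ℤ)+1) - k) := by
      rw [conv_eq_sum hσTu1 hv.2 n le_rfl le_rfl]
      rw [Finset.sum_congr rfl (fun k hk => by
        rw [show σ ((slsT A M u).1 k)
            = ∑ j ∈ range J, (A (j+1) * ((k - ((j:ℤ)+1)) • σ (u.1 (k - ((j:ℤ)+1))))
                + -(M (j+1) * σ (u.2 (k - ((j:ℤ)+1))))) from by
          rw [slsT_fst_eq_sum A M hu k (J := J)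
            (by simp only [hSdef, Finset.mem_Icc] at hk; omega), map_sum]
          exact Finset.sum_congr rfl fun j _ => by
            rw [map_add, map_mul, map_mul, hA, hM, map_zsmul, neg_mul], Finset.sum_mul])]
      rw [Finset.sum_comm]
      refine Finset.sum_congr rfl fun j hj => ?_
      exact shift_reindex (fun k => A (j+1) * (k • σ (u.1 k)) + -(M (j+1) * σ (u.2 k))) v.2
        N n ((j:ℤ)+1) (by omega)
        (fun k hk => by
          show A (j+1) * (k • σ (u.1 k)) + -(M (j+1) * σ (u.2 k)) = 0
          rw [hσu1 k hk, hσu2 k hk, smul_zero, mul_zero, mul_zero, neg_zero, add_zero])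
        hv.2
    have hP2 : conv (slsT A M u).2 v.1 n
        = ∑ j ∈ range J,
            (∑ k ∈ S, (A (j+1) * (k • u.2 k + (((j:ℚ)+2)/2) • u.2 k))
                * v.1 (n - ((j:ℤ)+1) - k)
              + ∑ k ∈ S, (M (j+1) * (k • u.1 k)) * v.1 (n - (j:ℤ) - k)) := by
      rw [conv_eq_sum hTu.2 hv.1 n le_rfl le_rfl]
      rw [Finset.sum_congr rfl (fun k hk => by
        rw [slsT_snd_eq_sum A M hu k (J := J)
          (by simp only [hSdef, Finset.mem_Icc] at hk; omega), Finset.sum_mul])]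
      rw [Finset.sum_comm]
      refine Finset.sum_congr rfl fun j hj => ?_
      rw [Finset.sum_congr rfl (fun k (_ : k ∈ S) => add_mul
        (A (j+1) * ((k - ((j:ℤ)+1)) • u.2 (k - ((j:ℤ)+1))
          + (((j:ℚ)+2)/2) • u.2 (k - ((j:ℤ)+1))))
        (M (j+1) * ((k - (j:ℤ)) • u.1 (k - (j:ℤ)))) (v.1 (n - k))), Finset.sum_add_distrib]
      refine congrArg₂ (· + · : R → R → R) ?_ ?_
      · exact shift_reindex (fun k => A (j+1) * (k • u.2 k + (((j:ℚ)+2)/2) • u.2 k)) v.1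
          N n ((j:ℤ)+1) (by omega)
          (fun k hk => by
            show A (j+1) * (k • u.2 k + (((j:ℚ)+2)/2) • u.2 k) = 0
            rw [hu.2 k hk, smul_zero, smul_zero, add_zero, mul_zero])
          hv.1
      · exact shift_reindex (fun k => M (j+1) * (k • u.1 k)) v.1 N n (j:ℤ) (by omega)
          (fun k hk => by
            show M (j+1) * (k • u.1 k) = 0
            rw [hu.1 k hk, smul_zero, mul_zero])
          hv.1
    have hP3 : conv (fun k => σ (u.1 k)) (slsT A M v).2 n
        = ∑ j ∈ range J, ∑ k ∈ S,
            σ (u.1 k) * (A (j+1) * ((n - ((j:ℤ)+1) - k) • v.2 (n - ((j:ℤ)+1) - k)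
                + (((j:ℚ)+2)/2) • v.2 (n - ((j:ℤ)+1) - k))
              + M (j+1) * ((n - (j:ℤ) - k) • v.1 (n - (j:ℤ) - k))) := by
      rw [conv_eq_sum hσu1 hTv.2 n le_rfl le_rfl]
      rw [Finset.sum_congr rfl (fun k hk => by
        rw [slsT_snd_eq_sum A M hv (n - k) (J := J)
          (by simp only [hSdef, Finset.mem_Icc] at hk; omega), Finset.mul_sum])]
      rw [Finset.sum_comm]
      refine Finset.sum_congr rfl fun j hj => Finset.sum_congr rfl fun k hk => ?_
      rw [show n - k - ((j:ℤ)+1) = n - ((j:ℤ)+1) - k by ring,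
        show n - k - (j:ℤ) = n - (j:ℤ) - k by ring]
    have hP4 : conv u.2 (slsT A M v).1 n
        = ∑ j ∈ range J, ∑ k ∈ S,
            u.2 k * (A (j+1) * ((n - ((j:ℤ)+1) - k) • v.1 (n - ((j:ℤ)+1) - k))
              + M (j+1) * v.2 (n - ((j:ℤ)+1) - k)) := by
      rw [conv_eq_sum hu.2 hTv.1 n le_rfl le_rfl]
      rw [Finset.sum_congr rfl (fun k hk => by
        rw [slsT_fst_eq_sum A M hv (n - k) (J := J)
          (by simp only [hSdef, Finset.mem_Icc] at hk; omega), Finset.mul_sum])]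
      rw [Finset.sum_comm]
      refine Finset.sum_congr rfl fun j hj => Finset.sum_congr rfl fun k hk => ?_
      rw [show n - k - ((j:ℤ)+1) = n - ((j:ℤ)+1) - k by ring]
    show _ = (conv (fun k => σ ((slsT A M u).1 k)) v.2 n + conv (slsT A M u).2 v.1 n)
      + (conv (fun k => σ (u.1 k)) (slsT A M v).2 n + conv u.2 (slsT A M v).1 n)
    rw [lhs_eq, hP1, hP2, hP3, hP4, ← Finset.sum_add_distrib, ← Finset.sum_add_distrib,
      ← Finset.sum_add_distrib]
    refine Finset.sum_congr rfl fun j hj => ?_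
    rw [← Finset.sum_add_distrib, ← Finset.sum_add_distrib, ← Finset.sum_add_distrib,
      ← Finset.sum_add_distrib]
    refine Finset.sum_congr rfl fun k hk => ?_
    generalize hm : n - ((j:ℤ)+1) - k = m
    generalize hr : n - (j:ℤ) - k = r
    rw [show n - ((j:ℤ)+1) = k + m from by omega, show n - (j:ℤ) = k + r from by omega]
    have csj := central_shift σ hcomm (hA (j+1))
    have osj := odd_shift σ hσ hcomm hanti (hM (j+1))
    simp only [add_smul, smul_add, mul_add, add_mul, neg_mul, smul_mul_assoc,
      mul_smul_comm, mul_assoc, csj, osj, hσ]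
    abel
include hσ hcomm hanti hA hM in
/-- Iterated Leibniz rule for `T`. -/
lemma leibniz {u v : SLS R} {N : ℤ} (hu : BddP u N) (hv : BddP v N) (k : ℕ) :
    (slsT A M)^[k] (slsMul σ u v)
      = ∑ i ∈ range (k+1), ((k.choose i : ℚ)) •
          slsMul σ ((slsT A M)^[i] u) ((slsT A M)^[k-i] v) := by
  induction k with
  | zero => simp
  | succ k ih =>
    have hterm : ∀ i, BddP (((k.choose i : ℚ)) •
        slsMul σ ((slsT A M)^[i] u) ((slsT A M)^[k-i] v)) (N + N) :=
      fun i => BddP.smul _ ((hu.iter A M i).mul σ (hv.iter A M (k-i)))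
    rw [Function.iterate_succ_apply', ih,
      slsT_sum A M _ _ (N + N) (fun i _ => hterm i)]
    have step : ∀ i ∈ range (k+1),
        slsT A M (((k.choose i : ℚ)) •
            slsMul σ ((slsT A M)^[i] u) ((slsT A M)^[k-i] v))
          = ((k.choose i : ℚ)) •
              (slsMul σ ((slsT A M)^[i+1] u) ((slsT A M)^[k-i] v)
                + slsMul σ ((slsT A M)^[i] u) ((slsT A M)^[(k+1)-i] v)) := by
      intro i hi
      rw [Finset.mem_range] at hi
      rw [slsT_smul, slsT_mul σ hσ hcomm hanti A M hA hM (hu.iter A M i) (hv.iter A M (k-i)),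
        ← Function.iterate_succ_apply' (slsT A M) i u,
        ← Function.iterate_succ_apply' (slsT A M) (k-i) v]
      simp only [Nat.succ_eq_add_one, show k - i + 1 = (k+1) - i from by omega]
    rw [Finset.sum_congr rfl step]
    have split : ∑ i ∈ range (k+1), ((k.choose i : ℚ)) •
          (slsMul σ ((slsT A M)^[i+1] u) ((slsT A M)^[k-i] v)
            + slsMul σ ((slsT A M)^[i] u) ((slsT A M)^[(k+1)-i] v))
        = (∑ i ∈ range (k+1), ((k.choose i : ℚ)) •
            slsMul σ ((slsT A M)^[i+1] u) ((slsT A M)^[k-i] v))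
          + ∑ i ∈ range (k+1), ((k.choose i : ℚ)) •
            slsMul σ ((slsT A M)^[i] u) ((slsT A M)^[(k+1)-i] v) := by
      rw [← Finset.sum_add_distrib]
      exact Finset.sum_congr rfl fun i _ => smul_add _ _ _
    rw [split]
    -- now reassemble the binomial coefficients
    have expand : ∑ i ∈ range (k+2), (((k+1).choose i : ℚ)) •
          slsMul σ ((slsT A M)^[i] u) ((slsT A M)^[(k+1)-i] v)
        = (∑ i ∈ range (k+1), (((k+1).choose (i+1) : ℚ)) •
            slsMul σ ((slsT A M)^[i+1] u) ((slsT A M)^[k-i] v))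
          + slsMul σ u ((slsT A M)^[k+1] v) := by
      rw [Finset.sum_range_succ' _ (k+1)]
      simp only [Nat.succ_sub_succ, Nat.choose_zero_right, Nat.cast_one, one_smul,
        Function.iterate_zero_apply, Nat.sub_zero]
    rw [expand]
    have pascal : ∑ i ∈ range (k+1), (((k+1).choose (i+1) : ℚ)) •
          slsMul σ ((slsT A M)^[i+1] u) ((slsT A M)^[k-i] v)
        = (∑ i ∈ range (k+1), ((k.choose i : ℚ)) •
            slsMul σ ((slsT A M)^[i+1] u) ((slsT A M)^[k-i] v))
          + ∑ i ∈ range (k+1), ((k.choose (i+1) : ℚ)) •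
            slsMul σ ((slsT A M)^[i+1] u) ((slsT A M)^[k-i] v) := by
      rw [← Finset.sum_add_distrib]
      refine Finset.sum_congr rfl fun i _ => ?_
      rw [Nat.choose_succ_succ', Nat.cast_add, add_smul]
    rw [pascal]
    have last : ∑ i ∈ range (k+1), ((k.choose (i+1) : ℚ)) •
          slsMul σ ((slsT A M)^[i+1] u) ((slsT A M)^[k-i] v)
        = ∑ i ∈ range k, ((k.choose (i+1) : ℚ)) •
            slsMul σ ((slsT A M)^[i+1] u) ((slsT A M)^[k-i] v) := by
      rw [Finset.sum_range_succ, Nat.choose_succ_self, Nat.cast_zero, zero_smul, add_zero]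
    have other : ∑ i ∈ range (k+1), ((k.choose i : ℚ)) •
          slsMul σ ((slsT A M)^[i] u) ((slsT A M)^[(k+1)-i] v)
        = (∑ i ∈ range k, ((k.choose (i+1) : ℚ)) •
            slsMul σ ((slsT A M)^[i+1] u) ((slsT A M)^[k-i] v))
          + slsMul σ u ((slsT A M)^[k+1] v) := by
      rw [Finset.sum_range_succ' _ k]
      simp only [Nat.succ_sub_succ, Nat.choose_zero_right, Nat.cast_one, one_smul,
        Function.iterate_zero_apply, Nat.sub_zero]
    rw [last, other]
    abel

end deriv

section assembly

/-- Reindexing a triangular double sum, given vanishing beyond the antidiagonal `K`. -/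
lemma sum_triangle {β : Type*} [AddCommMonoid β] (K : ℕ) (f : ℕ → ℕ → β)
    (hf : ∀ i l, K ≤ i + l → f i l = 0) :
    ∑ k ∈ range K, ∑ i ∈ range (k+1), f i (k-i)
      = ∑ i ∈ range K, ∑ l ∈ range K, f i l := by
  have main : ∀ K' : ℕ, ∑ k ∈ range K', ∑ i ∈ range (k+1), f i (k-i)
      = ∑ i ∈ range K', ∑ l ∈ range (K'-i), f i l := by
    intro K'
    induction K' with
    | zero => simp
    | succ K' ih =>
      have inner : ∀ i ∈ range K', ∑ l ∈ range (K'+1-i), f i l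
          = ∑ l ∈ range (K'-i), f i l + f i (K'-i) := by
        intro i hi
        rw [Finset.mem_range] at hi
        rw [show K'+1-i = (K'-i)+1 from by omega, Finset.sum_range_succ]
      calc ∑ k ∈ range (K'+1), ∑ i ∈ range (k+1), f i (k-i)
          = (∑ i ∈ range K', ∑ l ∈ range (K'-i), f i l)
              + ((∑ i ∈ range K', f i (K'-i)) + f K' 0) := by
            rw [Finset.sum_range_succ, ih, Finset.sum_range_succ, Nat.sub_self]
        _ = ∑ i ∈ range (K'+1), ∑ l ∈ range (K'+1-i), f i l := by
            rw [Finset.sum_range_succ (fun i => ∑ l ∈ range (K'+1-i), f i l) K',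
              Finset.sum_congr rfl inner, Finset.sum_add_distrib,
              show K'+1-K' = 1 from by omega, Finset.sum_range_one]
            abel
  rw [main K]
  refine Finset.sum_congr rfl fun i hi => ?_
  rw [Finset.mem_range] at hi
  refine Finset.sum_subset (Finset.range_subset_range.2 (by omega)) fun l _ hl => ?_
  rw [Finset.mem_range] at hl
  exact hf i l (by omega)

/-- The factorial coefficient identity. -/
lemma fact_coeff {i k : ℕ} (h : i ≤ k) :
    (k.factorial : ℚ)⁻¹ * (k.choose i : ℚ)
      = (i.factorial : ℚ)⁻¹ * ((k-i).factorial : ℚ)⁻¹ := by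
  have key : (k.choose i : ℚ) * i.factorial * (k-i).factorial = k.factorial := by
    exact_mod_cast congrArg (Nat.cast : ℕ → ℚ) (Nat.choose_mul_factorial_mul_factorial h)
  have h1 : (i.factorial : ℚ) ≠ 0 := Nat.cast_ne_zero.2 i.factorial_ne_zero
  have h2 : ((k-i).factorial : ℚ) ≠ 0 := Nat.cast_ne_zero.2 (k-i).factorial_ne_zero
  have h3 : (k.factorial : ℚ) ≠ 0 := Nat.cast_ne_zero.2 k.factorial_ne_zero
  field_simp
  linear_combination key

lemma main
    (σ : R →+* R) (hσ : ∀ r : R, σ (σ r) = r)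
    (hcomm : ∀ u v : R, σ u = u → u * v = v * u)
    (hanti : ∀ u v : R, σ u = -u → σ v = -v → u * v = -(v * u))
    (A M : ℕ → R) (hA : ∀ j, σ (A j) = A j) (hM : ∀ j, σ (M j) = -(M j))
    (u v : SLS R)
    (hu1 : SuppBddBelow u.1) (hu2 : SuppBddBelow u.2)
    (hv1 : SuppBddBelow v.1) (hv2 : SuppBddBelow v.2) :
    slsExp A M (slsMul σ u v) = slsMul σ (slsExp A M u) (slsExp A M v) := by
  classical
  obtain ⟨Na, hNa⟩ := hu1
  obtain ⟨Nb, hNb⟩ := hu2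
  obtain ⟨Nc, hNc⟩ := hv1
  obtain ⟨Nd, hNd⟩ := hv2
  set N : ℤ := min (min Na Nb) (min Nc Nd) with hNdef
  have hu : BddP u N := ⟨fun m hm => hNa m (by omega), fun m hm => hNb m (by omega)⟩
  have hv : BddP v N := ⟨fun m hm => hNc m (by omega), fun m hm => hNd m (by omega)⟩
  have huv : BddP (slsMul σ u v) (N + N) := hu.mul σ hv
  have hou : OrdP u (2*N) := hu.ord
  have hov : OrdP v (2*N) := hv.ord
  have houv : OrdP (slsMul σ u v) (2*N + 2*N) := hou.mul σ hov
  have heu : BddP (slsExp A M u) N := hu.exp A M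
  have hev : BddP (slsExp A M v) N := hv.exp A M
  refine Prod.ext (funext fun n => ?_) (funext fun n => ?_)
  case _ =>
    set K : ℕ := (2*n - 4*N + 2).toNat with hKdef
    have hK : 2*n - 4*N + 2 ≤ (K:ℤ) := Int.self_le_toNat _
    set S : Finset ℤ := Icc N (n - N) with hSdef
    have lhs_eq : (slsExp A M (slsMul σ u v)).1 n
        = ∑ k ∈ range K, ∑ i ∈ range (k+1),
            ((i.factorial:ℚ)⁻¹ * ((k-i).factorial:ℚ)⁻¹) •
              (slsMul σ ((slsT A M)^[i] u) ((slsT A M)^[k-i] v)).1 n := by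
      rw [slsExp_fst_eq_sum A M houv n (K := K) (by omega)]
      refine Finset.sum_congr rfl fun k _ => ?_
      rw [leibniz σ hσ hcomm hanti A M hA hM hu hv k, Prod.fst_sum, Finset.sum_apply,
        Finset.smul_sum]
      refine Finset.sum_congr rfl fun i hi => ?_
      rw [Finset.mem_range] at hi
      rw [Prod.smul_fst, Pi.smul_apply, smul_smul, fact_coeff (by omega)]
    have hf : ∀ i l, K ≤ i + l → ((i.factorial:ℚ)⁻¹ * (l.factorial:ℚ)⁻¹) •
        (slsMul σ ((slsT A M)^[i] u) ((slsT A M)^[l] v)).1 n = 0 := by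
      intro i l hil
      have hil' : (K:ℤ) ≤ (i:ℤ) + (l:ℤ) := by exact_mod_cast hil
      have ho := (hou.iter A M i).mul σ (hov.iter A M l)
      rw [ho.1 n (by omega), smul_zero]
    have rhs_eq : (slsMul σ (slsExp A M u) (slsExp A M v)).1 n
        = ∑ i ∈ range K, ∑ l ∈ range K, ((i.factorial:ℚ)⁻¹ * (l.factorial:ℚ)⁻¹) •
            (slsMul σ ((slsT A M)^[i] u) ((slsT A M)^[l] v)).1 n := by
      show conv (slsExp A M u).1 (slsExp A M v).1 n = _
      rw [conv_eq_sum heu.1 hev.1 n le_rfl le_rfl]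
      rw [Finset.sum_congr rfl (fun m hm => by
        rw [slsExp_fst_eq_sum A M hou m (K := K)
            (by simp only [hSdef, Finset.mem_Icc] at hm; omega),
          slsExp_fst_eq_sum A M hov (n - m) (K := K)
            (by simp only [hSdef, Finset.mem_Icc] at hm; omega),
          Finset.sum_mul])]
      rw [Finset.sum_comm]
      refine Finset.sum_congr rfl fun i _ => ?_
      rw [Finset.sum_congr rfl (fun m (hm : m ∈ S) => Finset.mul_sum _ _ _), Finset.sum_comm]
      refine Finset.sum_congr rfl fun l _ => ?_
      have e : (slsMul σ ((slsT A M)^[i] u) ((slsT A M)^[l] v)).1 n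
          = ∑ m ∈ S, ((slsT A M)^[i] u).1 m * ((slsT A M)^[l] v).1 (n - m) :=
        conv_eq_sum (hu.iter A M i).1 (hv.iter A M l).1 n le_rfl le_rfl
      rw [e, Finset.smul_sum]
      refine Finset.sum_congr rfl fun m _ => ?_
      rw [smul_mul_assoc, mul_smul_comm, smul_smul]
    rw [lhs_eq, sum_triangle K _ hf, rhs_eq]
  case _ =>
    set K : ℕ := (2*n - 4*N + 2).toNat with hKdef
    have hK : 2*n - 4*N + 2 ≤ (K:ℤ) := Int.self_le_toNat _
    set S : Finset ℤ := Icc N (n - N) with hSdef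
    have lhs_eq : (slsExp A M (slsMul σ u v)).2 n
        = ∑ k ∈ range K, ∑ i ∈ range (k+1),
            ((i.factorial:ℚ)⁻¹ * ((k-i).factorial:ℚ)⁻¹) •
              (slsMul σ ((slsT A M)^[i] u) ((slsT A M)^[k-i] v)).2 n := by
      rw [slsExp_snd_eq_sum A M houv n (K := K) (by omega)]
      refine Finset.sum_congr rfl fun k _ => ?_
      rw [leibniz σ hσ hcomm hanti A M hA hM hu hv k, Prod.snd_sum, Finset.sum_apply,
        Finset.smul_sum]
      refine Finset.sum_congr rfl fun i hi => ?_
      rw [Finset.mem_range] at hi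
      rw [Prod.smul_snd, Pi.smul_apply, smul_smul, fact_coeff (by omega)]
    have hf : ∀ i l, K ≤ i + l → ((i.factorial:ℚ)⁻¹ * (l.factorial:ℚ)⁻¹) •
        (slsMul σ ((slsT A M)^[i] u) ((slsT A M)^[l] v)).2 n = 0 := by
      intro i l hil
      have hil' : (K:ℤ) ≤ (i:ℤ) + (l:ℤ) := by exact_mod_cast hil
      have ho := (hou.iter A M i).mul σ (hov.iter A M l)
      rw [ho.2 n (by omega), smul_zero]
    have hσE1 : ∀ m : ℤ, m < N → σ ((slsExp A M u).1 m) = 0 := fun m hm => by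
      rw [heu.1 m hm, map_zero]
    have e2 : ∀ i l : ℕ, (slsMul σ ((slsT A M)^[i] u) ((slsT A M)^[l] v)).2 n
        = ∑ m ∈ S, (σ (((slsT A M)^[i] u).1 m) * ((slsT A M)^[l] v).2 (n - m)
            + ((slsT A M)^[i] u).2 m * ((slsT A M)^[l] v).1 (n - m)) := by
      intro i l
      show conv (fun k => σ (((slsT A M)^[i] u).1 k)) ((slsT A M)^[l] v).2 n
        + conv ((slsT A M)^[i] u).2 ((slsT A M)^[l] v).1 n = _
      rw [conv_eq_sum (fun m hm => by rw [(hu.iter A M i).1 m hm, map_zero])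
          (hv.iter A M l).2 n (lo := N) (hi := n - N) le_rfl le_rfl,
        conv_eq_sum (hu.iter A M i).2 (hv.iter A M l).1 n (lo := N) (hi := n - N)
          le_rfl le_rfl, ← Finset.sum_add_distrib]
    have rhs_eq : (slsMul σ (slsExp A M u) (slsExp A M v)).2 n
        = ∑ i ∈ range K, ∑ l ∈ range K, ((i.factorial:ℚ)⁻¹ * (l.factorial:ℚ)⁻¹) •
            (slsMul σ ((slsT A M)^[i] u) ((slsT A M)^[l] v)).2 n := by
      show conv (fun k => σ ((slsExp A M u).1 k)) (slsExp A M v).2 n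
        + conv (slsExp A M u).2 (slsExp A M v).1 n = _
      rw [conv_eq_sum hσE1 hev.2 n (lo := N) (hi := n - N) le_rfl le_rfl,
        conv_eq_sum heu.2 hev.1 n (lo := N) (hi := n - N) le_rfl le_rfl,
        ← Finset.sum_add_distrib]
      have inner : ∀ m ∈ S, σ ((slsExp A M u).1 m) * (slsExp A M v).2 (n - m)
            + (slsExp A M u).2 m * (slsExp A M v).1 (n - m)
          = ∑ i ∈ range K, ∑ l ∈ range K,
              ((i.factorial:ℚ)⁻¹ * (l.factorial:ℚ)⁻¹) •
                (σ (((slsT A M)^[i] u).1 m) * ((slsT A M)^[l] v).2 (n - m)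
                  + ((slsT A M)^[i] u).2 m * ((slsT A M)^[l] v).1 (n - m)) := by
        intro m hm
        simp only [hSdef, Finset.mem_Icc] at hm
        have hE1 : σ ((slsExp A M u).1 m)
            = ∑ i ∈ range K, (i.factorial:ℚ)⁻¹ • σ (((slsT A M)^[i] u).1 m) := by
          rw [slsExp_fst_eq_sum A M hou m (K := K) (by omega), map_sum]
          exact Finset.sum_congr rfl fun i _ => map_rat_smul σ _ _
        rw [hE1, slsExp_snd_eq_sum A M hov (n - m) (K := K) (by omega),
          slsExp_snd_eq_sum A M hou m (K := K) (by omega),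
          slsExp_fst_eq_sum A M hov (n - m) (K := K) (by omega),
          Finset.sum_mul, Finset.sum_mul, ← Finset.sum_add_distrib]
        refine Finset.sum_congr rfl fun i _ => ?_
        rw [Finset.mul_sum, Finset.mul_sum, ← Finset.sum_add_distrib]
        refine Finset.sum_congr rfl fun l _ => ?_
        rw [smul_mul_assoc, mul_smul_comm, smul_smul, smul_mul_assoc, mul_smul_comm,
          smul_smul, ← smul_add]
      rw [Finset.sum_congr rfl inner, Finset.sum_comm]
      refine Finset.sum_congr rfl fun i _ => ?_
      rw [Finset.sum_comm]
      refine Finset.sum_congr rfl fun l _ => ?_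
      rw [← Finset.smul_sum, ← e2 i l]
    rw [lhs_eq, sum_triangle K _ hf, rhs_eq]

end assembly

end Stmt3Aux

/-- automorphism property for `exp(T)` on `R((x))[φ]`, with the formal
variable `y` set equal to `1`: `exp(T)(uv) = exp(T)(u)·exp(T)(v)` for all
`u, v ∈ R((x))[φ]`. -/
theorem statement3
    (σ : R →+* R) (hσ : ∀ r : R, σ (σ r) = r)
    (hcomm : ∀ u v : R, σ u = u → u * v = v * u)
    (hanti : ∀ u v : R, σ u = -u → σ v = -v → u * v = -(v * u))
    (A M : ℕ → R) (hA : ∀ j, σ (A j) = A j) (hM : ∀ j, σ (M j) = -(M j))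
    (u v : SLS R)
    (hu1 : SuppBddBelow u.1) (hu2 : SuppBddBelow u.2)
    (hv1 : SuppBddBelow v.1) (hv2 : SuppBddBelow v.2) :
    slsExp A M (slsMul σ u v) = slsMul σ (slsExp A M u) (slsExp A M v) :=
  Stmt3Aux.main σ hσ hcomm hanti A M hA hM u v hu1 hu2 hv1 hv2

end
end

section
/- Let R be a supercommutative superalgebra over ℚ, and let R((x⁻¹))[φ] be the superalgebra of formal Laurent series in x⁻¹ (finitely many positive powers of x) together with the odd variable φ. Given sequences (B_j)_{j≥1} in R⁰ and (N_{j−1/2})_{j≥1} in R¹, let T̄ = −Σ_{j≥1}(B_j L_{−j}(x,φ) + N_{j−1/2} G_{−j+1/2}(x,φ)) act on R((x⁻¹))[φ] (see context); exp(T̄)(u) = Σ_{n≥0}T̄ⁿ(u)/n! is coefficientwise well defined for every u ∈ R((x⁻¹))[φ]. Then for all u, v ∈ R((x⁻¹))[φ]: exp(T̄)(uv) = exp(T̄)(u) · exp(T̄)(v). (That is, the automorphism property holds for this operator with the formal variable y set equal to 1.) -/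
/- A supercommutative superalgebra over `ℚ` is encoded as a `ℚ`-algebra `R` together with its
grading involution `σ : R →+* R` (`σ = id` on `R⁰`, `σ = −id` on `R¹`; over `ℚ` the data of
the direct sum decomposition `R = R⁰ ⊕ R¹` is equivalent to that of `σ`), with
supercommutativity expressed by: even elements are central, and odd elements anticommute.

An element `a + φb` of `R((x⁻¹))[φ]` is encoded as the pair `(a, b)` of its coefficient
functions `ℤ → R`; membership in `R((x⁻¹))` corresponds to the support being bounded above
(finitely many positive powers of `x`). -/

noncomputable section

variable {R : Type*} [Ring R] [Algebra ℚ R]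

/-- Support bounded above: finitely many positive powers of `x`. -/
def SuppBddAbove (a : ℤ → R) : Prop := ∃ N : ℤ, ∀ n : ℤ, N < n → a n = 0

/-- The operator `T̄ = −Σ_{j≥1}(B_j L_{−j}(x,φ) + N_{j−1/2} G_{−j+1/2}(x,φ))`, concretely
`T̄(a, b) = (Σ_{j≥1} B_j x^(−j+1) a′ + Σ_{j≥1} N_{j−1/2} x^(−j+1) b,
Σ_{j≥1} B_j (x^(−j+1) b′ + ((−j+1)/2) x^(−j) b) + Σ_{j≥1} N_{j−1/2} x^(−j+1) a′)`, written
coefficientwise (the summation index is shifted so that `j + 1` ranges over `j ≥ 1`;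
`N j` stands for `N_{j−1/2}`). -/
def slsTbar (B N : ℕ → R) (u : SLS R) : SLS R :=
  (fun n => ∑ᶠ j : ℕ,
      (B (j + 1) * ((n + (j : ℤ) + 1) • u.1 (n + (j : ℤ) + 1))
        + N (j + 1) * u.2 (n + (j : ℤ))),
   fun n => ∑ᶠ j : ℕ,
      (B (j + 1) * ((n + (j : ℤ) + 1) • u.2 (n + (j : ℤ) + 1)
          + (-(j : ℚ) / 2) • u.2 (n + (j : ℤ) + 1))
        + N (j + 1) * ((n + (j : ℤ) + 1) • u.1 (n + (j : ℤ) + 1))))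

/-- `exp(T̄)(u) = Σ_{k≥0} T̄ᵏ(u)/k!`, coefficientwise. -/
def slsExpBar (B N : ℕ → R) (u : SLS R) : SLS R :=
  (fun n => ∑ᶠ k : ℕ, (k.factorial : ℚ)⁻¹ • (((slsTbar B N)^[k]) u).1 n,
   fun n => ∑ᶠ k : ℕ, (k.factorial : ℚ)⁻¹ • (((slsTbar B N)^[k]) u).2 n)

open Function

set_option linter.unusedSectionVars false

/-! ### Auxiliary lemmas -/

lemma fsum_eq_sum {ι : Type*} (f : ι → R) (t : Finset ι) (h : ∀ i, f i ≠ 0 → i ∈ t) :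
    ∑ᶠ i, f i = ∑ i ∈ t, f i :=
  finsum_eq_sum_of_support_subset f h

lemma supp_fin_Icc {f : ℤ → R} (lo hi : ℤ) (h : ∀ k, k < lo ∨ hi < k → f k = 0) :
    (support f).Finite := by
  refine (Set.finite_Icc lo hi).subset ?_
  intro k hk
  simp only [Set.mem_Icc]
  by_contra hc
  push_neg at hc
  rcases le_or_gt lo k with h1 | h1
  · exact hk (h k (Or.inr (hc h1)))
  · exact hk (h k (Or.inl h1))

lemma half_cancel {x y : R} (h : x + x = y + y) : x = y := by
  have h2 : (2:ℚ) • x = (2:ℚ) • y := by rw [two_smul, two_smul]; exact h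
  have := congrArg (fun z => ((2:ℚ)⁻¹) • z) h2
  simpa [smul_smul] using this

section Comm

variable (σ : R →+* R)

lemma sigma_qsmul (q : ℚ) (r : R) : σ (q • r) = q • σ r := by
  rw [Algebra.smul_def, Algebra.smul_def, map_mul]
  congr 1
  exact RingHom.congr_fun (Subsingleton.elim (σ.comp (algebraMap ℚ R)) (algebraMap ℚ R)) q

lemma odd_swap (hσ : ∀ r : R, σ (σ r) = r)
    (hcomm : ∀ u v : R, σ u = u → u * v = v * u)
    (hanti : ∀ u v : R, σ u = -u → σ v = -v → u * v = -(v * u))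
    {ν : R} (hν : σ ν = -ν) (r : R) : ν * r = σ r * ν := by
  have base : ∀ s : R, ν * σ s = s * ν := by
    intro s
    have a1 : ν * (s + σ s) = (s + σ s) * ν :=
      (hcomm (s + σ s) ν (by rw [map_add, hσ, add_comm])).symm
    have a2 : ν * (s - σ s) = -((s - σ s) * ν) :=
      hanti ν (s - σ s) hν (by rw [map_sub, hσ, neg_sub])
    have key : ν * σ s + ν * σ s = s * ν + s * ν := by
      calc ν * σ s + ν * σ s
          = ν * ((s + σ s) - (s - σ s)) := by
            rw [show (s + σ s) - (s - σ s) = σ s + σ s from by abel, mul_add]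
        _ = ν * (s + σ s) - ν * (s - σ s) := mul_sub ν _ _
        _ = (s + σ s) * ν + (s - σ s) * ν := by rw [a1, a2, sub_neg_eq_add]
        _ = s * ν + s * ν := by
            rw [← add_mul, show (s + σ s) + (s - σ s) = s + s from by abel, add_mul]
    exact half_cancel key
  have := base (σ r)
  rwa [hσ r] at this

end Comm

/-! ### Degree bounds -/

def Bdd (M : ℤ) (u : SLS R) : Prop :=
  (∀ n : ℤ, M < 2*n → u.1 n = 0) ∧ (∀ n : ℤ, M < 2*n + 1 → u.2 n = 0)

lemma Bdd.mono {M M' : ℤ} {u : SLS R} (h : M ≤ M') (hu : Bdd M u) : Bdd M' u :=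
  ⟨fun n hn => hu.1 n (by omega), fun n hn => hu.2 n (by omega)⟩

lemma exists_bdd {u : SLS R} (h1 : SuppBddAbove u.1) (h2 : SuppBddAbove u.2) :
    ∃ M : ℤ, 0 ≤ M ∧ Bdd M u := by
  obtain ⟨N1, hN1⟩ := h1
  obtain ⟨N2, hN2⟩ := h2
  refine ⟨2 * max (max N1 N2) 0 + 2, by positivity, ?_, ?_⟩
  · intro n hn
    apply hN1
    have := le_max_left (max N1 N2) 0
    have := le_max_left N1 N2
    omega
  · intro n hn
    apply hN2
    have := le_max_left (max N1 N2) 0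
    have := le_max_right N1 N2
    omega

lemma Bdd.add {M : ℤ} {u v : SLS R} (hu : Bdd M u) (hv : Bdd M v) : Bdd M (u + v) := by
  refine ⟨fun n hn => ?_, fun n hn => ?_⟩
  · show u.1 n + v.1 n = 0
    rw [hu.1 n hn, hv.1 n hn, add_zero]
  · show u.2 n + v.2 n = 0
    rw [hu.2 n hn, hv.2 n hn, add_zero]

lemma Bdd.qsmul {M : ℤ} {u : SLS R} (q : ℚ) (hu : Bdd M u) : Bdd M (q • u) := by
  refine ⟨fun n hn => ?_, fun n hn => ?_⟩
  · show q • u.1 n = 0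
    rw [hu.1 n hn, smul_zero]
  · show q • u.2 n = 0
    rw [hu.2 n hn, smul_zero]

lemma Bdd.zero {M : ℤ} : Bdd M (0 : SLS R) := ⟨fun _ _ => rfl, fun _ _ => rfl⟩

lemma Bdd.sum {M : ℤ} {ι : Type*} (s : Finset ι) (f : ι → SLS R)
    (h : ∀ i ∈ s, Bdd M (f i)) : Bdd M (∑ i ∈ s, f i) := by
  classical
  induction s using Finset.induction_on with
  | empty => simpa using Bdd.zero
  | insert a s hnotmem ih =>
    rw [Finset.sum_insert hnotmem]
    exact (h a (Finset.mem_insert_self a s)).add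
      (ih fun i hi => h i (Finset.mem_insert_of_mem hi))

lemma Bdd.tbar {M : ℤ} {u : SLS R} (B N : ℕ → R) (hu : Bdd M u) :
    Bdd (M - 1) (slsTbar B N u) := by
  refine ⟨fun n hn => ?_, fun n hn => ?_⟩
  · apply finsum_eq_zero_of_forall_eq_zero
    intro j
    rw [hu.1 (n + (j:ℤ) + 1) (by omega), hu.2 (n + (j:ℤ)) (by omega)]
    simp
  · apply finsum_eq_zero_of_forall_eq_zero
    intro j
    rw [hu.1 (n + (j:ℤ) + 1) (by omega), hu.2 (n + (j:ℤ) + 1) (by omega)]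
    simp

lemma Bdd.iter {M : ℤ} {u : SLS R} (B N : ℕ → R) (hu : Bdd M u) (k : ℕ) :
    Bdd (M - k) ((slsTbar B N)^[k] u) := by
  induction k with
  | zero => simpa using hu
  | succ k ih =>
    rw [Function.iterate_succ_apply']
    have := ih.tbar B N
    exact this.mono (by push_cast; omega)

lemma Bdd.mul {M M' : ℤ} {u v : SLS R} (σ : R →+* R) (hu : Bdd M u) (hv : Bdd M' v) :
    Bdd (M + M') (slsMul σ u v) := by
  refine ⟨fun n hn => ?_, fun n hn => ?_⟩
  · apply finsum_eq_zero_of_forall_eq_zero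
    intro k
    by_cases h : u.1 k = 0
    · rw [h, zero_mul]
    · have hk : ¬ (M < 2*k) := fun hh => h (hu.1 k hh)
      rw [hv.1 (n - k) (by omega), mul_zero]
  · show conv (fun k => σ (u.1 k)) v.2 n + conv u.2 v.1 n = 0
    have e1 : conv (fun k => σ (u.1 k)) v.2 n = 0 := by
      apply finsum_eq_zero_of_forall_eq_zero
      intro k
      by_cases h : u.1 k = 0
      · simp [h]
      · have hk : ¬ (M < 2*k) := fun hh => h (hu.1 k hh)
        rw [hv.2 (n - k) (by omega), mul_zero]
    have e2 : conv u.2 v.1 n = 0 := by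
      apply finsum_eq_zero_of_forall_eq_zero
      intro k
      by_cases h : u.2 k = 0
      · rw [h, zero_mul]
      · have hk : ¬ (M < 2*k + 1) := fun hh => h (hu.2 k hh)
        rw [hv.1 (n - k) (by omega), mul_zero]
    rw [e1, e2, add_zero]

/-! ### The single-`j` summand of `T̄` and the Leibniz rule -/

def Tj (B N : ℕ → R) (j : ℕ) (u : SLS R) : SLS R :=
  (fun n => B (j + 1) * ((n + (j : ℤ) + 1) • u.1 (n + (j : ℤ) + 1))
      + N (j + 1) * u.2 (n + (j : ℤ)),
   fun n => B (j + 1) * ((n + (j : ℤ) + 1) • u.2 (n + (j : ℤ) + 1)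
        + (-(j : ℚ) / 2) • u.2 (n + (j : ℤ) + 1))
      + N (j + 1) * ((n + (j : ℤ) + 1) • u.1 (n + (j : ℤ) + 1)))

lemma slsTbar_fst (B N : ℕ → R) (u : SLS R) (n : ℤ) :
    (slsTbar B N u).1 n = ∑ᶠ j : ℕ, (Tj B N j u).1 n := rfl

lemma slsTbar_snd (B N : ℕ → R) (u : SLS R) (n : ℤ) :
    (slsTbar B N u).2 n = ∑ᶠ j : ℕ, (Tj B N j u).2 n := rfl

lemma fin_conv (f g : ℤ → R) {F G : ℤ} (hF : 0 ≤ F) (hG : 0 ≤ G)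
    (hf : ∀ k, F < 2*k → f k = 0) (hg : ∀ k, G < 2*k → g k = 0)
    (m : ℤ) (h : ℤ → R) (hh : ∀ k, f k = 0 ∨ g (m - k) = 0 → h k = 0) :
    (support h).Finite := by
  apply supp_fin_Icc (m - G) F
  intro k hk
  rcases hk with hk | hk
  · exact hh k (Or.inr (hg _ (by omega)))
  · exact hh k (Or.inl (hf _ (by omega)))

lemma fin_add {ι : Type*} {f g : ι → R} (hf : (support f).Finite)
    (hg : (support g).Finite) : (support fun k => f k + g k).Finite :=
  (hf.union hg).subset (Function.support_add f g)

lemma fsum_shift (f : ℤ → R) (t : ℤ) : ∑ᶠ k : ℤ, f (k + t) = ∑ᶠ k : ℤ, f k :=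
  finsum_comp_equiv (Equiv.addRight t) (f := f)

lemma smul_split (z w : ℤ) (x y X : R) :
    X * ((z + w) • (x * y)) = X * ((z • x) * y) + X * (x * (w • y)) := by
  simp only [add_smul, mul_add, smul_mul_assoc, mul_smul_comm]

lemma leibniz_j (σ : R →+* R) (hσ : ∀ r : R, σ (σ r) = r)
    (hcomm : ∀ u v : R, σ u = u → u * v = v * u)
    (hanti : ∀ u v : R, σ u = -u → σ v = -v → u * v = -(v * u))
    (B N : ℕ → R) (hB : ∀ j, σ (B j) = B j) (hN : ∀ j, σ (N j) = -(N j))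
    (j : ℕ) {Mu Mv : ℤ} (hMu : 0 ≤ Mu) (hMv : 0 ≤ Mv)
    {u v : SLS R} (hu : Bdd Mu u) (hv : Bdd Mv v) :
    Tj B N j (slsMul σ u v) = slsMul σ (Tj B N j u) v + slsMul σ u (Tj B N j v) := by
  have hcomB : ∀ r : R, B (j+1) * r = r * B (j+1) := fun r => hcomm _ r (hB (j+1))
  have hswapN : ∀ r : R, N (j+1) * r = σ r * N (j+1) :=
    odd_swap σ hσ hcomm hanti (hN (j+1))
  have hNσ : ∀ x w : R, N (j+1) * (σ x * w) = x * (N (j+1) * w) := by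
    intro x w
    rw [← mul_assoc, hswapN (σ x), hσ x, mul_assoc]
  have hNσ' : ∀ x w : R, N (j+1) * (x * w) = σ x * (N (j+1) * w) := by
    intro x w
    rw [← mul_assoc, hswapN x, mul_assoc]
  have hBc : ∀ x w : R, B (j+1) * (x * w) = x * (B (j+1) * w) := by
    intro x w
    rw [← mul_assoc, hcomB x, mul_assoc]
  have hu1 : ∀ k, Mu < 2*k → u.1 k = 0 := hu.1
  have hu2 : ∀ k, Mu < 2*k → u.2 k = 0 := fun k hk => hu.2 k (by omega)
  have hv1 : ∀ k, Mv < 2*k → v.1 k = 0 := hv.1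
  have hv2 : ∀ k, Mv < 2*k → v.2 k = 0 := fun k hk => hv.2 k (by omega)
  have hsu1 : ∀ k, Mu < 2*k → σ (u.1 k) = 0 := fun k hk => by rw [hu1 k hk, map_zero]
  have hsu2 : ∀ k, Mu < 2*k → σ (u.2 k) = 0 := fun k hk => by rw [hu2 k hk, map_zero]
  ext1
  case fst =>
    funext n
    have f1 : (support fun k => u.1 k * v.1 (n + (j:ℤ) + 1 - k)).Finite :=
      fin_conv u.1 v.1 hMu hMv hu1 hv1 (n + (j:ℤ) + 1) _ (fun k hk => by rcases hk with h | h <;> simp [h])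
    have f2 : (support fun k => (n + (j:ℤ) + 1) • (u.1 k * v.1 (n + (j:ℤ) + 1 - k))).Finite :=
      fin_conv u.1 v.1 hMu hMv hu1 hv1 (n + (j:ℤ) + 1) _ (fun k hk => by rcases hk with h | h <;> simp [h])
    have fS1 : (support fun k => B (j+1) * ((k • u.1 k) * v.1 (n + (j:ℤ) + 1 - k))).Finite :=
      fin_conv u.1 v.1 hMu hMv hu1 hv1 (n + (j:ℤ) + 1) _ (fun k hk => by rcases hk with h | h <;> simp [h])
    have fS2 : (support fun k =>
        B (j+1) * (u.1 k * (((n + (j:ℤ) + 1 - k)) • v.1 (n + (j:ℤ) + 1 - k)))).Finite :=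
      fin_conv u.1 v.1 hMu hMv hu1 hv1 (n + (j:ℤ) + 1) _ (fun k hk => by rcases hk with h | h <;> simp [h])
    have fS3 : (support fun k => N (j+1) * (σ (u.1 k) * v.2 (n + (j:ℤ) - k))).Finite :=
      fin_conv (fun k => σ (u.1 k)) v.2 hMu hMv hsu1 hv2 (n + (j:ℤ)) _
        (fun k hk => by rcases hk with h | h <;> simp [h])
    have fS4 : (support fun k => N (j+1) * (u.2 k * v.1 (n + (j:ℤ) - k))).Finite :=
      fin_conv u.2 v.1 hMu hMv hu2 hv1 (n + (j:ℤ)) _ (fun k hk => by rcases hk with h | h <;> simp [h])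
    have hL1 : B (j+1) * ((n + (j:ℤ) + 1) • conv u.1 v.1 (n + (j:ℤ) + 1))
        = (∑ᶠ k : ℤ, B (j+1) * ((k • u.1 k) * v.1 (n + (j:ℤ) + 1 - k)))
          + ∑ᶠ k : ℤ, B (j+1) * (u.1 k * ((n + (j:ℤ) + 1 - k) • v.1 (n + (j:ℤ) + 1 - k))) := by
      rw [show conv u.1 v.1 (n + (j:ℤ) + 1)
          = ∑ᶠ k : ℤ, u.1 k * v.1 (n + (j:ℤ) + 1 - k) from rfl,
        smul_finsum' (n + (j:ℤ) + 1) f1, mul_finsum' _ (B (j+1)) f2,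
        ← finsum_add_distrib fS1 fS2]
      refine finsum_congr fun k => ?_
      have hs := smul_split k (n + (j:ℤ) + 1 - k) (u.1 k) (v.1 (n + (j:ℤ) + 1 - k)) (B (j+1))
      rw [show k + (n + (j:ℤ) + 1 - k) = n + (j:ℤ) + 1 from by ring] at hs
      exact hs
    have hL2 : N (j+1) * conv (fun k => σ (u.1 k)) v.2 (n + (j:ℤ))
        = ∑ᶠ k : ℤ, N (j+1) * (σ (u.1 k) * v.2 (n + (j:ℤ) - k)) :=
      mul_finsum' _ (N (j+1)) (fin_conv (fun k => σ (u.1 k)) v.2 hMu hMv hsu1 hv2 (n + (j:ℤ)) _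
        (fun k hk => by rcases hk with h | h <;> simp [h]))
    have hL3 : N (j+1) * conv u.2 v.1 (n + (j:ℤ))
        = ∑ᶠ k : ℤ, N (j+1) * (u.2 k * v.1 (n + (j:ℤ) - k)) :=
      mul_finsum' _ (N (j+1)) (fin_conv u.2 v.1 hMu hMv hu2 hv1 (n + (j:ℤ)) _
        (fun k hk => by rcases hk with h | h <;> simp [h]))
    have hR1 : conv (Tj B N j u).1 v.1 n
        = (∑ᶠ k : ℤ, B (j+1) * ((k • u.1 k) * v.1 (n + (j:ℤ) + 1 - k)))
          + ∑ᶠ k : ℤ, N (j+1) * (u.2 k * v.1 (n + (j:ℤ) - k)) := by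
      have e1 : conv (Tj B N j u).1 v.1 n
          = (∑ᶠ k : ℤ, (B (j+1) * ((k + (j:ℤ) + 1) • u.1 (k + (j:ℤ) + 1))) * v.1 (n - k))
            + ∑ᶠ k : ℤ, (N (j+1) * u.2 (k + (j:ℤ))) * v.1 (n - k) := by
        rw [show conv (Tj B N j u).1 v.1 n
            = ∑ᶠ k : ℤ, ((B (j+1) * ((k + (j:ℤ) + 1) • u.1 (k + (j:ℤ) + 1))
              + N (j+1) * u.2 (k + (j:ℤ))) * v.1 (n - k)) from rfl]
        rw [← finsum_add_distrib
          (fin_conv (fun k => u.1 (k + (j:ℤ) + 1)) v.1 hMu hMv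
            (fun k hk => hu1 _ (by omega)) hv1 n _
            (fun k hk => by rcases hk with h | h <;> simp [h]))
          (fin_conv (fun k => u.2 (k + (j:ℤ))) v.1 hMu hMv
            (fun k hk => hu2 _ (by omega)) hv1 n _
            (fun k hk => by rcases hk with h | h <;> simp [h]))]
        exact finsum_congr fun k => add_mul _ _ _
      rw [e1]
      congr 1
      · rw [← fsum_shift (fun k => B (j+1) * ((k • u.1 k) * v.1 (n + (j:ℤ) + 1 - k))) ((j:ℤ) + 1)]
        refine finsum_congr fun k => ?_
        show (B (j+1) * ((k + (j:ℤ) + 1) • u.1 (k + (j:ℤ) + 1))) * v.1 (n - k)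
          = B (j+1) * (((k + ((j:ℤ) + 1)) • u.1 (k + ((j:ℤ) + 1)))
              * v.1 (n + (j:ℤ) + 1 - (k + ((j:ℤ) + 1))))
        rw [show n + (j:ℤ) + 1 - (k + ((j:ℤ) + 1)) = n - k from by ring,
          show k + ((j:ℤ) + 1) = k + (j:ℤ) + 1 from by ring, ← mul_assoc]
      · rw [← fsum_shift (fun k => N (j+1) * (u.2 k * v.1 (n + (j:ℤ) - k))) (j:ℤ)]
        refine finsum_congr fun k => ?_
        show (N (j+1) * u.2 (k + (j:ℤ))) * v.1 (n - k)
          = N (j+1) * (u.2 (k + (j:ℤ)) * v.1 (n + (j:ℤ) - (k + (j:ℤ))))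
        rw [show n + (j:ℤ) - (k + (j:ℤ)) = n - k from by ring, ← mul_assoc]
    have hR2 : conv u.1 (Tj B N j v).1 n
        = (∑ᶠ k : ℤ, B (j+1) * (u.1 k * ((n + (j:ℤ) + 1 - k) • v.1 (n + (j:ℤ) + 1 - k))))
          + ∑ᶠ k : ℤ, N (j+1) * (σ (u.1 k) * v.2 (n + (j:ℤ) - k)) := by
      rw [show conv u.1 (Tj B N j v).1 n
          = ∑ᶠ k : ℤ, (u.1 k * (B (j+1) * ((n - k + (j:ℤ) + 1) • v.1 (n - k + (j:ℤ) + 1))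
            + N (j+1) * v.2 (n - k + (j:ℤ)))) from rfl]
      rw [← finsum_add_distrib fS2 fS3]
      refine finsum_congr fun k => ?_
      rw [show n - k + (j:ℤ) + 1 = n + (j:ℤ) + 1 - k from by ring,
        show n - k + (j:ℤ) = n + (j:ℤ) - k from by ring,
        mul_add, hBc, hNσ]
    show B (j+1) * ((n + (j:ℤ) + 1) • conv u.1 v.1 (n + (j:ℤ) + 1))
        + N (j+1) * (conv (fun k => σ (u.1 k)) v.2 (n + (j:ℤ)) + conv u.2 v.1 (n + (j:ℤ)))
      = conv (Tj B N j u).1 v.1 n + conv u.1 (Tj B N j v).1 n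
    rw [mul_add, hL1, hL2, hL3, hR1, hR2]
    abel
  case snd =>
    funext n
    -- atom finiteness
    have fV1 : (support fun k => B (j+1) * ((k • σ (u.1 k)) * v.2 (n + (j:ℤ) + 1 - k))).Finite :=
      fin_conv (fun k => σ (u.1 k)) v.2 hMu hMv hsu1 hv2 (n + (j:ℤ) + 1) _
        (fun k hk => by rcases hk with h | h <;> simp [h])
    have fV2 : (support fun k =>
        B (j+1) * (σ (u.1 k) * ((n + (j:ℤ) + 1 - k) • v.2 (n + (j:ℤ) + 1 - k)))).Finite :=
      fin_conv (fun k => σ (u.1 k)) v.2 hMu hMv hsu1 hv2 (n + (j:ℤ) + 1) _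
        (fun k hk => by rcases hk with h | h <;> simp [h])
    have fV3 : (support fun k => B (j+1) * ((k • u.2 k) * v.1 (n + (j:ℤ) + 1 - k))).Finite :=
      fin_conv u.2 v.1 hMu hMv hu2 hv1 (n + (j:ℤ) + 1) _ (fun k hk => by rcases hk with h | h <;> simp [h])
    have fV4 : (support fun k =>
        B (j+1) * (u.2 k * ((n + (j:ℤ) + 1 - k) • v.1 (n + (j:ℤ) + 1 - k)))).Finite :=
      fin_conv u.2 v.1 hMu hMv hu2 hv1 (n + (j:ℤ) + 1) _ (fun k hk => by rcases hk with h | h <;> simp [h])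
    have fV5 : (support fun k =>
        B (j+1) * ((-(j:ℚ)/2) • (σ (u.1 k) * v.2 (n + (j:ℤ) + 1 - k)))).Finite :=
      fin_conv (fun k => σ (u.1 k)) v.2 hMu hMv hsu1 hv2 (n + (j:ℤ) + 1) _
        (fun k hk => by rcases hk with h | h <;> simp [h])
    have fV6 : (support fun k =>
        B (j+1) * ((-(j:ℚ)/2) • (u.2 k * v.1 (n + (j:ℤ) + 1 - k)))).Finite :=
      fin_conv u.2 v.1 hMu hMv hu2 hv1 (n + (j:ℤ) + 1) _ (fun k hk => by rcases hk with h | h <;> simp [h])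
    have fV7 : (support fun k => N (j+1) * ((k • u.1 k) * v.1 (n + (j:ℤ) + 1 - k))).Finite :=
      fin_conv u.1 v.1 hMu hMv hu1 hv1 (n + (j:ℤ) + 1) _ (fun k hk => by rcases hk with h | h <;> simp [h])
    have fV8 : (support fun k =>
        N (j+1) * (u.1 k * ((n + (j:ℤ) + 1 - k) • v.1 (n + (j:ℤ) + 1 - k)))).Finite :=
      fin_conv u.1 v.1 hMu hMv hu1 hv1 (n + (j:ℤ) + 1) _ (fun k hk => by rcases hk with h | h <;> simp [h])
    have fT10 : (support fun k => u.2 k * (N (j+1) * v.2 (n + (j:ℤ) - k))).Finite :=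
      fin_conv u.2 v.2 hMu hMv hu2 hv2 (n + (j:ℤ)) _ (fun k hk => by rcases hk with h | h <;> simp [h])
    -- LHS pieces
    have hL1' : B (j+1) * ((n + (j:ℤ) + 1) • conv (fun k => σ (u.1 k)) v.2 (n + (j:ℤ) + 1))
        = (∑ᶠ k : ℤ, B (j+1) * ((k • σ (u.1 k)) * v.2 (n + (j:ℤ) + 1 - k)))
          + ∑ᶠ k : ℤ, B (j+1) * (σ (u.1 k) * ((n + (j:ℤ) + 1 - k) • v.2 (n + (j:ℤ) + 1 - k))) := by
      rw [show conv (fun k => σ (u.1 k)) v.2 (n + (j:ℤ) + 1)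
          = ∑ᶠ k : ℤ, σ (u.1 k) * v.2 (n + (j:ℤ) + 1 - k) from rfl,
        smul_finsum' (n + (j:ℤ) + 1)
          (fin_conv (fun k => σ (u.1 k)) v.2 hMu hMv hsu1 hv2 (n + (j:ℤ) + 1) _
            (fun k hk => by rcases hk with h | h <;> simp [h])),
        mul_finsum' _ (B (j+1))
          (fin_conv (fun k => σ (u.1 k)) v.2 hMu hMv hsu1 hv2 (n + (j:ℤ) + 1) _
            (fun k hk => by rcases hk with h | h <;> simp [h])),
        ← finsum_add_distrib fV1 fV2]
      refine finsum_congr fun k => ?_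
      have hs := smul_split k (n + (j:ℤ) + 1 - k) (σ (u.1 k)) (v.2 (n + (j:ℤ) + 1 - k)) (B (j+1))
      rw [show k + (n + (j:ℤ) + 1 - k) = n + (j:ℤ) + 1 from by ring] at hs
      exact hs
    have hL2' : B (j+1) * ((n + (j:ℤ) + 1) • conv u.2 v.1 (n + (j:ℤ) + 1))
        = (∑ᶠ k : ℤ, B (j+1) * ((k • u.2 k) * v.1 (n + (j:ℤ) + 1 - k)))
          + ∑ᶠ k : ℤ, B (j+1) * (u.2 k * ((n + (j:ℤ) + 1 - k) • v.1 (n + (j:ℤ) + 1 - k))) := by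
      rw [show conv u.2 v.1 (n + (j:ℤ) + 1)
          = ∑ᶠ k : ℤ, u.2 k * v.1 (n + (j:ℤ) + 1 - k) from rfl,
        smul_finsum' (n + (j:ℤ) + 1)
          (fin_conv u.2 v.1 hMu hMv hu2 hv1 (n + (j:ℤ) + 1) _
            (fun k hk => by rcases hk with h | h <;> simp [h])),
        mul_finsum' _ (B (j+1))
          (fin_conv u.2 v.1 hMu hMv hu2 hv1 (n + (j:ℤ) + 1) _
            (fun k hk => by rcases hk with h | h <;> simp [h])),
        ← finsum_add_distrib fV3 fV4]
      refine finsum_congr fun k => ?_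
      have hs := smul_split k (n + (j:ℤ) + 1 - k) (u.2 k) (v.1 (n + (j:ℤ) + 1 - k)) (B (j+1))
      rw [show k + (n + (j:ℤ) + 1 - k) = n + (j:ℤ) + 1 from by ring] at hs
      exact hs
    have hL3' : B (j+1) * ((-(j:ℚ)/2) • conv (fun k => σ (u.1 k)) v.2 (n + (j:ℤ) + 1))
        = ∑ᶠ k : ℤ, B (j+1) * ((-(j:ℚ)/2) • (σ (u.1 k) * v.2 (n + (j:ℤ) + 1 - k))) := by
      rw [show conv (fun k => σ (u.1 k)) v.2 (n + (j:ℤ) + 1)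
          = ∑ᶠ k : ℤ, σ (u.1 k) * v.2 (n + (j:ℤ) + 1 - k) from rfl,
        smul_finsum' (-(j:ℚ)/2)
          (fin_conv (fun k => σ (u.1 k)) v.2 hMu hMv hsu1 hv2 (n + (j:ℤ) + 1) _
            (fun k hk => by rcases hk with h | h <;> simp [h])),
        mul_finsum' _ (B (j+1))
          (fin_conv (fun k => σ (u.1 k)) v.2 hMu hMv hsu1 hv2 (n + (j:ℤ) + 1) _
            (fun k hk => by rcases hk with h | h <;> simp [h]))]
    have hL4' : B (j+1) * ((-(j:ℚ)/2) • conv u.2 v.1 (n + (j:ℤ) + 1))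
        = ∑ᶠ k : ℤ, B (j+1) * ((-(j:ℚ)/2) • (u.2 k * v.1 (n + (j:ℤ) + 1 - k))) := by
      rw [show conv u.2 v.1 (n + (j:ℤ) + 1)
          = ∑ᶠ k : ℤ, u.2 k * v.1 (n + (j:ℤ) + 1 - k) from rfl,
        smul_finsum' (-(j:ℚ)/2)
          (fin_conv u.2 v.1 hMu hMv hu2 hv1 (n + (j:ℤ) + 1) _
            (fun k hk => by rcases hk with h | h <;> simp [h])),
        mul_finsum' _ (B (j+1))
          (fin_conv u.2 v.1 hMu hMv hu2 hv1 (n + (j:ℤ) + 1) _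
            (fun k hk => by rcases hk with h | h <;> simp [h]))]
    have hL5' : N (j+1) * ((n + (j:ℤ) + 1) • conv u.1 v.1 (n + (j:ℤ) + 1))
        = (∑ᶠ k : ℤ, N (j+1) * ((k • u.1 k) * v.1 (n + (j:ℤ) + 1 - k)))
          + ∑ᶠ k : ℤ, N (j+1) * (u.1 k * ((n + (j:ℤ) + 1 - k) • v.1 (n + (j:ℤ) + 1 - k))) := by
      rw [show conv u.1 v.1 (n + (j:ℤ) + 1)
          = ∑ᶠ k : ℤ, u.1 k * v.1 (n + (j:ℤ) + 1 - k) from rfl,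
        smul_finsum' (n + (j:ℤ) + 1)
          (fin_conv u.1 v.1 hMu hMv hu1 hv1 (n + (j:ℤ) + 1) _
            (fun k hk => by rcases hk with h | h <;> simp [h])),
        mul_finsum' _ (N (j+1))
          (fin_conv u.1 v.1 hMu hMv hu1 hv1 (n + (j:ℤ) + 1) _
            (fun k hk => by rcases hk with h | h <;> simp [h])),
        ← finsum_add_distrib fV7 fV8]
      refine finsum_congr fun k => ?_
      have hs := smul_split k (n + (j:ℤ) + 1 - k) (u.1 k) (v.1 (n + (j:ℤ) + 1 - k)) (N (j+1))
      rw [show k + (n + (j:ℤ) + 1 - k) = n + (j:ℤ) + 1 from by ring] at hs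
      exact hs
    -- RHS pieces
    have hσTj : ∀ k : ℤ, σ ((Tj B N j u).1 k)
        = B (j+1) * ((k + (j:ℤ) + 1) • σ (u.1 (k + (j:ℤ) + 1)))
          - N (j+1) * σ (u.2 (k + (j:ℤ))) := by
      intro k
      show σ (B (j+1) * ((k + (j:ℤ) + 1) • u.1 (k + (j:ℤ) + 1)) + N (j+1) * u.2 (k + (j:ℤ))) = _
      rw [map_add, map_mul, map_mul, hB (j+1), hN (j+1), map_zsmul, neg_mul, sub_eq_add_neg]
    have hT1 : conv (fun k => σ ((Tj B N j u).1 k)) v.2 n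
        = (∑ᶠ k : ℤ, B (j+1) * ((k • σ (u.1 k)) * v.2 (n + (j:ℤ) + 1 - k)))
          - ∑ᶠ k : ℤ, u.2 k * (N (j+1) * v.2 (n + (j:ℤ) - k)) := by
      have e1 : conv (fun k => σ ((Tj B N j u).1 k)) v.2 n
          = (∑ᶠ k : ℤ, (B (j+1) * ((k + (j:ℤ) + 1) • σ (u.1 (k + (j:ℤ) + 1)))) * v.2 (n - k))
            - ∑ᶠ k : ℤ, (N (j+1) * σ (u.2 (k + (j:ℤ)))) * v.2 (n - k) := by
        rw [show conv (fun k => σ ((Tj B N j u).1 k)) v.2 n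
            = ∑ᶠ k : ℤ, σ ((Tj B N j u).1 k) * v.2 (n - k) from rfl,
          ← finsum_sub_distrib
            (fin_conv (fun k => σ (u.1 (k + (j:ℤ) + 1))) v.2 hMu hMv
              (fun k hk => hsu1 _ (by omega)) hv2 n _
              (fun k hk => by rcases hk with h | h <;> simp [h]))
            (fin_conv (fun k => σ (u.2 (k + (j:ℤ)))) v.2 hMu hMv
              (fun k hk => hsu2 _ (by omega)) hv2 n _
              (fun k hk => by rcases hk with h | h <;> simp [h]))]
        refine finsum_congr fun k => ?_
        rw [hσTj k, sub_mul]
      rw [e1]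
      congr 1
      · rw [← fsum_shift (fun k => B (j+1) * ((k • σ (u.1 k)) * v.2 (n + (j:ℤ) + 1 - k)))
          ((j:ℤ) + 1)]
        refine finsum_congr fun k => ?_
        show (B (j+1) * ((k + (j:ℤ) + 1) • σ (u.1 (k + (j:ℤ) + 1)))) * v.2 (n - k)
          = B (j+1) * (((k + ((j:ℤ) + 1)) • σ (u.1 (k + ((j:ℤ) + 1))))
              * v.2 (n + (j:ℤ) + 1 - (k + ((j:ℤ) + 1))))
        rw [show n + (j:ℤ) + 1 - (k + ((j:ℤ) + 1)) = n - k from by ring,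
          show k + ((j:ℤ) + 1) = k + (j:ℤ) + 1 from by ring, ← mul_assoc]
      · rw [← fsum_shift (fun k => u.2 k * (N (j+1) * v.2 (n + (j:ℤ) - k))) (j:ℤ)]
        refine finsum_congr fun k => ?_
        show (N (j+1) * σ (u.2 (k + (j:ℤ)))) * v.2 (n - k)
          = u.2 (k + (j:ℤ)) * (N (j+1) * v.2 (n + (j:ℤ) - (k + (j:ℤ))))
        rw [show n + (j:ℤ) - (k + (j:ℤ)) = n - k from by ring, mul_assoc, hNσ]
    have hT2 : conv (Tj B N j u).2 v.1 n
        = ((∑ᶠ k : ℤ, B (j+1) * ((k • u.2 k) * v.1 (n + (j:ℤ) + 1 - k)))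
            + ∑ᶠ k : ℤ, B (j+1) * ((-(j:ℚ)/2) • (u.2 k * v.1 (n + (j:ℤ) + 1 - k))))
          + ∑ᶠ k : ℤ, N (j+1) * ((k • u.1 k) * v.1 (n + (j:ℤ) + 1 - k)) := by
      have e1 : conv (Tj B N j u).2 v.1 n
          = ((∑ᶠ k : ℤ, (B (j+1) * ((k + (j:ℤ) + 1) • u.2 (k + (j:ℤ) + 1))) * v.1 (n - k))
              + ∑ᶠ k : ℤ, (B (j+1) * ((-(j:ℚ)/2) • u.2 (k + (j:ℤ) + 1))) * v.1 (n - k))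
            + ∑ᶠ k : ℤ, (N (j+1) * ((k + (j:ℤ) + 1) • u.1 (k + (j:ℤ) + 1))) * v.1 (n - k) := by
        rw [show conv (Tj B N j u).2 v.1 n
            = ∑ᶠ k : ℤ, ((B (j+1) * ((k + (j:ℤ) + 1) • u.2 (k + (j:ℤ) + 1)
                + (-(j:ℚ)/2) • u.2 (k + (j:ℤ) + 1))
              + N (j+1) * ((k + (j:ℤ) + 1) • u.1 (k + (j:ℤ) + 1))) * v.1 (n - k)) from rfl,
          ← finsum_add_distrib
            (fin_conv (fun k => u.2 (k + (j:ℤ) + 1)) v.1 hMu hMv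
              (fun k hk => hu2 _ (by omega)) hv1 n _
              (fun k hk => by rcases hk with h | h <;> simp [h]))
            (fin_conv (fun k => u.2 (k + (j:ℤ) + 1)) v.1 hMu hMv
              (fun k hk => hu2 _ (by omega)) hv1 n _
              (fun k hk => by rcases hk with h | h <;> simp [h])),
          ← finsum_add_distrib
            (fin_add
              (fin_conv (fun k => u.2 (k + (j:ℤ) + 1)) v.1 hMu hMv
                (fun k hk => hu2 _ (by omega)) hv1 n _
                (fun k hk => by rcases hk with h | h <;> simp [h]))
              (fin_conv (fun k => u.2 (k + (j:ℤ) + 1)) v.1 hMu hMv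
                (fun k hk => hu2 _ (by omega)) hv1 n _
                (fun k hk => by rcases hk with h | h <;> simp [h])))
            (fin_conv (fun k => u.1 (k + (j:ℤ) + 1)) v.1 hMu hMv
              (fun k hk => hu1 _ (by omega)) hv1 n _
              (fun k hk => by rcases hk with h | h <;> simp [h]))]
        refine finsum_congr fun k => ?_
        rw [mul_add (B (j+1)), add_mul, add_mul]
      rw [e1]
      congr 1
      · congr 1
        · rw [← fsum_shift (fun k => B (j+1) * ((k • u.2 k) * v.1 (n + (j:ℤ) + 1 - k)))
            ((j:ℤ) + 1)]
          refine finsum_congr fun k => ?_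
          show (B (j+1) * ((k + (j:ℤ) + 1) • u.2 (k + (j:ℤ) + 1))) * v.1 (n - k)
            = B (j+1) * (((k + ((j:ℤ) + 1)) • u.2 (k + ((j:ℤ) + 1)))
                * v.1 (n + (j:ℤ) + 1 - (k + ((j:ℤ) + 1))))
          rw [show n + (j:ℤ) + 1 - (k + ((j:ℤ) + 1)) = n - k from by ring,
            show k + ((j:ℤ) + 1) = k + (j:ℤ) + 1 from by ring, ← mul_assoc]
        · rw [← fsum_shift (fun k => B (j+1) * ((-(j:ℚ)/2) • (u.2 k * v.1 (n + (j:ℤ) + 1 - k))))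
            ((j:ℤ) + 1)]
          refine finsum_congr fun k => ?_
          show (B (j+1) * ((-(j:ℚ)/2) • u.2 (k + (j:ℤ) + 1))) * v.1 (n - k)
            = B (j+1) * ((-(j:ℚ)/2) • (u.2 (k + ((j:ℤ) + 1))
                * v.1 (n + (j:ℤ) + 1 - (k + ((j:ℤ) + 1)))))
          rw [show n + (j:ℤ) + 1 - (k + ((j:ℤ) + 1)) = n - k from by ring,
            show k + ((j:ℤ) + 1) = k + (j:ℤ) + 1 from by ring]
          simp only [mul_smul_comm, smul_mul_assoc, mul_assoc]
      · rw [← fsum_shift (fun k => N (j+1) * ((k • u.1 k) * v.1 (n + (j:ℤ) + 1 - k)))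
          ((j:ℤ) + 1)]
        refine finsum_congr fun k => ?_
        show (N (j+1) * ((k + (j:ℤ) + 1) • u.1 (k + (j:ℤ) + 1))) * v.1 (n - k)
          = N (j+1) * (((k + ((j:ℤ) + 1)) • u.1 (k + ((j:ℤ) + 1)))
              * v.1 (n + (j:ℤ) + 1 - (k + ((j:ℤ) + 1))))
        rw [show n + (j:ℤ) + 1 - (k + ((j:ℤ) + 1)) = n - k from by ring,
          show k + ((j:ℤ) + 1) = k + (j:ℤ) + 1 from by ring, ← mul_assoc]
    have hT3 : conv (fun k => σ (u.1 k)) (Tj B N j v).2 n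
        = ((∑ᶠ k : ℤ, B (j+1) * (σ (u.1 k) * ((n + (j:ℤ) + 1 - k) • v.2 (n + (j:ℤ) + 1 - k))))
            + ∑ᶠ k : ℤ, B (j+1) * ((-(j:ℚ)/2) • (σ (u.1 k) * v.2 (n + (j:ℤ) + 1 - k))))
          + ∑ᶠ k : ℤ, N (j+1) * (u.1 k * ((n + (j:ℤ) + 1 - k) • v.1 (n + (j:ℤ) + 1 - k))) := by
      rw [show conv (fun k => σ (u.1 k)) (Tj B N j v).2 n
          = ∑ᶠ k : ℤ, (σ (u.1 k) * (B (j+1) * ((n - k + (j:ℤ) + 1) • v.2 (n - k + (j:ℤ) + 1)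
              + (-(j:ℚ)/2) • v.2 (n - k + (j:ℤ) + 1))
            + N (j+1) * ((n - k + (j:ℤ) + 1) • v.1 (n - k + (j:ℤ) + 1)))) from rfl,
        ← finsum_add_distrib fV2 fV5,
        ← finsum_add_distrib (fin_add fV2 fV5) fV8]
      refine finsum_congr fun k => ?_
      rw [show n - k + (j:ℤ) + 1 = n + (j:ℤ) + 1 - k from by ring,
        mul_add (B (j+1)), mul_add (σ (u.1 k)), mul_add (σ (u.1 k)), ← hBc, ← hBc, ← hNσ']
      simp only [mul_smul_comm]
    have hT4 : conv u.2 (Tj B N j v).1 n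
        = (∑ᶠ k : ℤ, B (j+1) * (u.2 k * ((n + (j:ℤ) + 1 - k) • v.1 (n + (j:ℤ) + 1 - k))))
          + ∑ᶠ k : ℤ, u.2 k * (N (j+1) * v.2 (n + (j:ℤ) - k)) := by
      rw [show conv u.2 (Tj B N j v).1 n
          = ∑ᶠ k : ℤ, (u.2 k * (B (j+1) * ((n - k + (j:ℤ) + 1) • v.1 (n - k + (j:ℤ) + 1))
            + N (j+1) * v.2 (n - k + (j:ℤ)))) from rfl,
        ← finsum_add_distrib fV4 fT10]
      refine finsum_congr fun k => ?_
      rw [show n - k + (j:ℤ) + 1 = n + (j:ℤ) + 1 - k from by ring,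
        show n - k + (j:ℤ) = n + (j:ℤ) - k from by ring,
        mul_add, hBc]
    show B (j+1) * ((n + (j:ℤ) + 1) • (conv (fun k => σ (u.1 k)) v.2 (n + (j:ℤ) + 1)
          + conv u.2 v.1 (n + (j:ℤ) + 1))
        + (-(j:ℚ)/2) • (conv (fun k => σ (u.1 k)) v.2 (n + (j:ℤ) + 1)
          + conv u.2 v.1 (n + (j:ℤ) + 1)))
      + N (j+1) * ((n + (j:ℤ) + 1) • conv u.1 v.1 (n + (j:ℤ) + 1))
      = conv (fun k => σ ((Tj B N j u).1 k)) v.2 n + conv (Tj B N j u).2 v.1 n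
        + (conv (fun k => σ (u.1 k)) (Tj B N j v).2 n + conv u.2 (Tj B N j v).1 n)
    rw [smul_add, smul_add, mul_add (B (j+1)), mul_add (B (j+1)), mul_add (B (j+1)),
      hL1', hL2', hL3', hL4', hL5', hT1, hT2, hT3, hT4]
    abel
/-! ### Summing the Leibniz rule over `j` -/

lemma supp_fin_nat {f : ℕ → R} (J : ℕ) (h : ∀ j, J ≤ j → f j = 0) :
    (support f).Finite := by
  refine (Finset.range J).finite_toSet.subset ?_
  intro j hj
  simp only [Finset.coe_range, Set.mem_Iio]
  by_contra hc
  exact hj (h j (by omega))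

lemma finsum_swap (F : ℕ → ℤ → R) (s : Finset ℕ) (t : Finset ℤ)
    (hs : ∀ j k, j ∉ s → F j k = 0) (ht : ∀ j k, k ∉ t → F j k = 0) :
    ∑ᶠ j : ℕ, ∑ᶠ k : ℤ, F j k = ∑ᶠ k : ℤ, ∑ᶠ j : ℕ, F j k := by
  have h1 : ∀ j, ∑ᶠ k : ℤ, F j k = ∑ k ∈ t, F j k :=
    fun j => fsum_eq_sum _ t (fun k hk => by by_contra hc; exact hk (ht j k hc))
  have h2 : ∀ k, ∑ᶠ j : ℕ, F j k = ∑ j ∈ s, F j k :=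
    fun k => fsum_eq_sum _ s (fun j hj => by by_contra hc; exact hj (hs j k hc))
  calc ∑ᶠ j : ℕ, ∑ᶠ k : ℤ, F j k
      = ∑ᶠ j : ℕ, ∑ k ∈ t, F j k := finsum_congr h1
    _ = ∑ j ∈ s, ∑ k ∈ t, F j k := by
        refine fsum_eq_sum _ s (fun j hj => ?_)
        by_contra hc
        exact hj (Finset.sum_eq_zero fun k _ => hs j k hc)
    _ = ∑ k ∈ t, ∑ j ∈ s, F j k := Finset.sum_comm
    _ = ∑ k ∈ t, ∑ᶠ j : ℕ, F j k := by
        refine Finset.sum_congr rfl fun k _ => (h2 k).symm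
    _ = ∑ᶠ k : ℤ, ∑ᶠ j : ℕ, F j k := by
        refine (fsum_eq_sum _ t (fun k hk => ?_)).symm
        by_contra hc
        exact hk (finsum_eq_zero_of_forall_eq_zero fun j => ht j k hc)

section ConvSwap

variable {X : ℕ → ℤ → R} {Y : ℤ → R} {MX MY : ℤ}

lemma core_left (hMX : 0 ≤ MX) (hMY : 0 ≤ MY)
    (hX : ∀ (j : ℕ) (k : ℤ), MX ≤ 2*(k + (j:ℤ)) → X j k = 0)
    (hY : ∀ k, MY < 2*k → Y k = 0) (n : ℤ) :
    ∀ (j : ℕ) (k : ℤ), ((MX + 2*MY - 2*n).toNat + 1 : ℕ) ≤ j → X j k * Y (n - k) = 0 := by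
  intro j k hj
  by_cases hy : MY < 2*(n - k)
  · rw [hY _ hy, mul_zero]
  · by_cases hx : MX < 2*k
    · rw [hX j k (by omega), zero_mul]
    · rw [hX j k (by omega), zero_mul]

lemma conv_left_supp (hMX : 0 ≤ MX) (hMY : 0 ≤ MY)
    (hX : ∀ (j : ℕ) (k : ℤ), MX ≤ 2*(k + (j:ℤ)) → X j k = 0)
    (hY : ∀ k, MY < 2*k → Y k = 0) (n : ℤ) :
    (support fun j : ℕ => conv (X j) Y n).Finite :=
  supp_fin_nat ((MX + 2*MY - 2*n).toNat + 1) (fun j hj =>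
    finsum_eq_zero_of_forall_eq_zero (fun k => core_left hMX hMY hX hY n j k hj))

lemma conv_finsum_left (hMX : 0 ≤ MX) (hMY : 0 ≤ MY)
    (hX : ∀ (j : ℕ) (k : ℤ), MX ≤ 2*(k + (j:ℤ)) → X j k = 0)
    (hY : ∀ k, MY < 2*k → Y k = 0) (n : ℤ) :
    conv (fun k => ∑ᶠ j : ℕ, X j k) Y n = ∑ᶠ j : ℕ, conv (X j) Y n := by
  rw [show conv (fun k => ∑ᶠ j : ℕ, X j k) Y n
      = ∑ᶠ k : ℤ, (∑ᶠ j : ℕ, X j k) * Y (n - k) from rfl]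
  have e1 : ∀ k : ℤ, (∑ᶠ j : ℕ, X j k) * Y (n - k) = ∑ᶠ j : ℕ, X j k * Y (n - k) := by
    intro k
    exact finsum_mul' _ (Y (n - k)) (supp_fin_nat ((MX - 2*k).toNat + 1)
      (fun j hj => hX j k (by omega)))
  rw [finsum_congr e1]
  exact (finsum_swap _ (Finset.range ((MX + 2*MY - 2*n).toNat + 1)) (Finset.Icc (n - MY) MX)
    (fun j k hj => core_left hMX hMY hX hY n j k (by simpa using hj))
    (fun j k hk => by
      simp only [Finset.mem_Icc, not_and_or, not_le] at hk
      rcases hk with hk | hk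
      · rw [hY _ (by omega), mul_zero]
      · rw [hX j k (by omega), zero_mul])).symm

variable {Z : ℤ → R} {W : ℕ → ℤ → R}

lemma core_right (hMX : 0 ≤ MX) (hMY : 0 ≤ MY)
    (hZ : ∀ k, MX < 2*k → Z k = 0)
    (hW : ∀ (j : ℕ) (k : ℤ), MY ≤ 2*(k + (j:ℤ)) → W j k = 0) (n : ℤ) :
    ∀ (j : ℕ) (k : ℤ), ((MY + 2*MX - 2*n).toNat + 1 : ℕ) ≤ j → Z k * W j (n - k) = 0 := by
  intro j k hj
  by_cases hx : MX < 2*k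
  · rw [hZ _ hx, zero_mul]
  · by_cases hy : MY < 2*(n - k)
    · rw [hW j (n - k) (by omega), mul_zero]
    · rw [hW j (n - k) (by omega), mul_zero]

lemma conv_right_supp (hMX : 0 ≤ MX) (hMY : 0 ≤ MY)
    (hZ : ∀ k, MX < 2*k → Z k = 0)
    (hW : ∀ (j : ℕ) (k : ℤ), MY ≤ 2*(k + (j:ℤ)) → W j k = 0) (n : ℤ) :
    (support fun j : ℕ => conv Z (W j) n).Finite :=
  supp_fin_nat ((MY + 2*MX - 2*n).toNat + 1) (fun j hj =>
    finsum_eq_zero_of_forall_eq_zero (fun k => core_right hMX hMY hZ hW n j k hj))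

lemma conv_finsum_right (hMX : 0 ≤ MX) (hMY : 0 ≤ MY)
    (hZ : ∀ k, MX < 2*k → Z k = 0)
    (hW : ∀ (j : ℕ) (k : ℤ), MY ≤ 2*(k + (j:ℤ)) → W j k = 0) (n : ℤ) :
    conv Z (fun k => ∑ᶠ j : ℕ, W j k) n = ∑ᶠ j : ℕ, conv Z (W j) n := by
  rw [show conv Z (fun k => ∑ᶠ j : ℕ, W j k) n
      = ∑ᶠ k : ℤ, Z k * ∑ᶠ j : ℕ, W j (n - k) from rfl]
  have e1 : ∀ k : ℤ, Z k * (∑ᶠ j : ℕ, W j (n - k)) = ∑ᶠ j : ℕ, Z k * W j (n - k) := by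
    intro k
    exact mul_finsum' _ (Z k) (supp_fin_nat ((MY - 2*(n - k)).toNat + 1)
      (fun j hj => hW j (n - k) (by omega)))
  rw [finsum_congr e1]
  exact (finsum_swap _ (Finset.range ((MY + 2*MX - 2*n).toNat + 1)) (Finset.Icc (n - MY) MX)
    (fun j k hj => core_right hMX hMY hZ hW n j k (by simpa using hj))
    (fun j k hk => by
      simp only [Finset.mem_Icc, not_and_or, not_le] at hk
      rcases hk with hk | hk
      · rw [hW j (n - k) (by omega), mul_zero]
      · rw [hZ _ (by omega), zero_mul])).symm

end ConvSwap
/-! ### The full Leibniz rule and linearity -/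

section Full

variable (σ : R →+* R) (B N : ℕ → R)

lemma fin_Tj1 {Mu : ℤ} {u : SLS R} (hu : Bdd Mu u) (n : ℤ) :
    (support fun j : ℕ => (Tj B N j u).1 n).Finite :=
  supp_fin_nat ((Mu - 2*n).toNat + 1) (fun j hj => by
    show B (j+1) * ((n + (j:ℤ) + 1) • u.1 (n + (j:ℤ) + 1)) + N (j+1) * u.2 (n + (j:ℤ)) = 0
    rw [hu.1 _ (by omega), hu.2 _ (by omega)]
    simp)

lemma fin_Tj2 {Mu : ℤ} {u : SLS R} (hu : Bdd Mu u) (n : ℤ) :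
    (support fun j : ℕ => (Tj B N j u).2 n).Finite :=
  supp_fin_nat ((Mu - 2*n).toNat + 1) (fun j hj => by
    show B (j+1) * ((n + (j:ℤ) + 1) • u.2 (n + (j:ℤ) + 1)
        + (-(j:ℚ)/2) • u.2 (n + (j:ℤ) + 1))
      + N (j+1) * ((n + (j:ℤ) + 1) • u.1 (n + (j:ℤ) + 1)) = 0
    rw [hu.1 _ (by omega), hu.2 _ (by omega)]
    simp)

lemma leibniz (hσ : ∀ r : R, σ (σ r) = r)
    (hcomm : ∀ u v : R, σ u = u → u * v = v * u)
    (hanti : ∀ u v : R, σ u = -u → σ v = -v → u * v = -(v * u))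
    (hB : ∀ j, σ (B j) = B j) (hN : ∀ j, σ (N j) = -(N j))
    {Mu Mv : ℤ} (hMu : 0 ≤ Mu) (hMv : 0 ≤ Mv)
    {u v : SLS R} (hu : Bdd Mu u) (hv : Bdd Mv v) :
    slsTbar B N (slsMul σ u v)
      = slsMul σ (slsTbar B N u) v + slsMul σ u (slsTbar B N v) := by
  have key := fun j => leibniz_j σ hσ hcomm hanti B N hB hN j hMu hMv hu hv
  have hu1 : ∀ k, Mu < 2*k → u.1 k = 0 := hu.1
  have hu2' : ∀ k, Mu < 2*k → u.2 k = 0 := fun k hk => hu.2 k (by omega)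
  have hv1 : ∀ k, Mv < 2*k → v.1 k = 0 := hv.1
  have hv2' : ∀ k, Mv < 2*k → v.2 k = 0 := fun k hk => hv.2 k (by omega)
  have hsu1 : ∀ k, Mu < 2*k → σ (u.1 k) = 0 := fun k hk => by rw [hu1 k hk, map_zero]
  have hXu1 : ∀ (j : ℕ) (k : ℤ), Mu ≤ 2*(k + (j:ℤ)) → (Tj B N j u).1 k = 0 := by
    intro j k h
    show B (j+1) * ((k + (j:ℤ) + 1) • u.1 (k + (j:ℤ) + 1)) + N (j+1) * u.2 (k + (j:ℤ)) = 0
    rw [hu.1 _ (by omega), hu.2 _ (by omega)]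
    simp
  have hXu2 : ∀ (j : ℕ) (k : ℤ), Mu ≤ 2*(k + (j:ℤ)) → (Tj B N j u).2 k = 0 := by
    intro j k h
    show B (j+1) * ((k + (j:ℤ) + 1) • u.2 (k + (j:ℤ) + 1)
        + (-(j:ℚ)/2) • u.2 (k + (j:ℤ) + 1))
      + N (j+1) * ((k + (j:ℤ) + 1) • u.1 (k + (j:ℤ) + 1)) = 0
    rw [hu.1 _ (by omega), hu.2 _ (by omega)]
    simp
  have hXσu1 : ∀ (j : ℕ) (k : ℤ), Mu ≤ 2*(k + (j:ℤ)) → σ ((Tj B N j u).1 k) = 0 :=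
    fun j k h => by rw [hXu1 j k h, map_zero]
  have hYv1 : ∀ (j : ℕ) (k : ℤ), Mv ≤ 2*(k + (j:ℤ)) → (Tj B N j v).1 k = 0 := by
    intro j k h
    show B (j+1) * ((k + (j:ℤ) + 1) • v.1 (k + (j:ℤ) + 1)) + N (j+1) * v.2 (k + (j:ℤ)) = 0
    rw [hv.1 _ (by omega), hv.2 _ (by omega)]
    simp
  have hYv2 : ∀ (j : ℕ) (k : ℤ), Mv ≤ 2*(k + (j:ℤ)) → (Tj B N j v).2 k = 0 := by
    intro j k h
    show B (j+1) * ((k + (j:ℤ) + 1) • v.2 (k + (j:ℤ) + 1)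
        + (-(j:ℚ)/2) • v.2 (k + (j:ℤ) + 1))
      + N (j+1) * ((k + (j:ℤ) + 1) • v.1 (k + (j:ℤ) + 1)) = 0
    rw [hv.1 _ (by omega), hv.2 _ (by omega)]
    simp
  ext1
  case fst =>
    funext n
    rw [slsTbar_fst]
    have e : ∀ j : ℕ, (Tj B N j (slsMul σ u v)).1 n
        = conv (Tj B N j u).1 v.1 n + conv u.1 (Tj B N j v).1 n := fun j => by rw [key j]; rfl
    rw [finsum_congr e,
      finsum_add_distrib (conv_left_supp hMu hMv hXu1 hv1 n)
        (conv_right_supp hMu hMv hu1 hYv1 n)]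
    show _ = conv (slsTbar B N u).1 v.1 n + conv u.1 (slsTbar B N v).1 n
    rw [show (slsTbar B N u).1 = fun k => ∑ᶠ j : ℕ, (Tj B N j u).1 k from rfl,
      show (slsTbar B N v).1 = fun k => ∑ᶠ j : ℕ, (Tj B N j v).1 k from rfl,
      conv_finsum_left hMu hMv hXu1 hv1 n, conv_finsum_right hMu hMv hu1 hYv1 n]
  case snd =>
    funext n
    rw [slsTbar_snd]
    have e : ∀ j : ℕ, (Tj B N j (slsMul σ u v)).2 n
        = (conv (fun k => σ ((Tj B N j u).1 k)) v.2 n + conv (Tj B N j u).2 v.1 n)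
          + (conv (fun k => σ (u.1 k)) (Tj B N j v).2 n + conv u.2 (Tj B N j v).1 n) :=
      fun j => by rw [key j]; rfl
    rw [finsum_congr e,
      finsum_add_distrib
        (fin_add (conv_left_supp hMu hMv hXσu1 hv2' n) (conv_left_supp hMu hMv hXu2 hv1 n))
        (fin_add (conv_right_supp hMu hMv hsu1 hYv2 n) (conv_right_supp hMu hMv hu2' hYv1 n)),
      finsum_add_distrib (conv_left_supp hMu hMv hXσu1 hv2' n)
        (conv_left_supp hMu hMv hXu2 hv1 n),
      finsum_add_distrib (conv_right_supp hMu hMv hsu1 hYv2 n)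
        (conv_right_supp hMu hMv hu2' hYv1 n)]
    show _ = (conv (fun k => σ ((slsTbar B N u).1 k)) v.2 n + conv (slsTbar B N u).2 v.1 n)
      + (conv (fun k => σ (u.1 k)) (slsTbar B N v).2 n + conv u.2 (slsTbar B N v).1 n)
    have eσ : (fun k => σ ((slsTbar B N u).1 k))
        = fun k => ∑ᶠ j : ℕ, σ ((Tj B N j u).1 k) := by
      funext k
      exact (σ.toAddMonoidHom.map_finsum (fin_Tj1 B N hu k))
    rw [eσ, show (slsTbar B N u).2 = fun k => ∑ᶠ j : ℕ, (Tj B N j u).2 k from rfl,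
      show (slsTbar B N v).2 = fun k => ∑ᶠ j : ℕ, (Tj B N j v).2 k from rfl,
      show (slsTbar B N v).1 = fun k => ∑ᶠ j : ℕ, (Tj B N j v).1 k from rfl,
      conv_finsum_left hMu hMv hXσu1 hv2' n, conv_finsum_left hMu hMv hXu2 hv1 n,
      conv_finsum_right hMu hMv hsu1 hYv2 n, conv_finsum_right hMu hMv hu2' hYv1 n]

/-- Additivity of `slsTbar` on bounded elements. -/
lemma tbar_add {Mu Mv : ℤ} {u v : SLS R} (hu : Bdd Mu u) (hv : Bdd Mv v) :
    slsTbar B N (u + v) = slsTbar B N u + slsTbar B N v := by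
  ext1
  case fst =>
    funext n
    show ∑ᶠ j : ℕ, _ = (slsTbar B N u).1 n + (slsTbar B N v).1 n
    rw [slsTbar_fst, slsTbar_fst, ← finsum_add_distrib (fin_Tj1 B N hu n) (fin_Tj1 B N hv n)]
    refine finsum_congr fun j => ?_
    simp only [Tj, Prod.fst_add, Prod.snd_add, Pi.add_apply, smul_add, mul_add]
    abel
  case snd =>
    funext n
    show ∑ᶠ j : ℕ, _ = (slsTbar B N u).2 n + (slsTbar B N v).2 n
    rw [slsTbar_snd, slsTbar_snd, ← finsum_add_distrib (fin_Tj2 B N hu n) (fin_Tj2 B N hv n)]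
    refine finsum_congr fun j => ?_
    simp only [Tj, Prod.fst_add, Prod.snd_add, Pi.add_apply, smul_add, mul_add]
    abel

lemma tbar_qsmul {Mu : ℤ} {u : SLS R} (hu : Bdd Mu u) (q : ℚ) :
    slsTbar B N (q • u) = q • slsTbar B N u := by
  ext1
  case fst =>
    funext n
    show ∑ᶠ j : ℕ, _ = q • (slsTbar B N u).1 n
    rw [slsTbar_fst, smul_finsum' q (fin_Tj1 B N hu n)]
    refine finsum_congr fun j => ?_
    show B (j+1) * ((n + (j:ℤ) + 1) • (q • u.1 (n + (j:ℤ) + 1)))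
        + N (j+1) * (q • u.2 (n + (j:ℤ)))
      = q • (B (j+1) * ((n + (j:ℤ) + 1) • u.1 (n + (j:ℤ) + 1)) + N (j+1) * u.2 (n + (j:ℤ)))
    rw [smul_comm (n + (j:ℤ) + 1) q, mul_smul_comm q (B (j+1)), mul_smul_comm q (N (j+1))]
    exact (smul_add q _ _).symm
  case snd =>
    funext n
    show ∑ᶠ j : ℕ, _ = q • (slsTbar B N u).2 n
    rw [slsTbar_snd, smul_finsum' q (fin_Tj2 B N hu n)]
    refine finsum_congr fun j => ?_
    show B (j+1) * ((n + (j:ℤ) + 1) • (q • u.2 (n + (j:ℤ) + 1))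
          + (-(j:ℚ)/2) • (q • u.2 (n + (j:ℤ) + 1)))
        + N (j+1) * ((n + (j:ℤ) + 1) • (q • u.1 (n + (j:ℤ) + 1)))
      = q • (B (j+1) * ((n + (j:ℤ) + 1) • u.2 (n + (j:ℤ) + 1)
          + (-(j:ℚ)/2) • u.2 (n + (j:ℤ) + 1))
        + N (j+1) * ((n + (j:ℤ) + 1) • u.1 (n + (j:ℤ) + 1)))
    rw [smul_comm (n + (j:ℤ) + 1) q, smul_comm (-(j:ℚ)/2) q, ← smul_add,
      mul_smul_comm q (B (j+1)), smul_comm (n + (j:ℤ) + 1) q, mul_smul_comm q (N (j+1))]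
    exact (smul_add q _ _).symm

lemma tbar_sum {M : ℤ} {ι : Type*} (s : Finset ι) (f : ι → SLS R)
    (h : ∀ i ∈ s, Bdd M (f i)) :
    slsTbar B N (∑ i ∈ s, f i) = ∑ i ∈ s, slsTbar B N (f i) := by
  classical
  induction s using Finset.induction_on with
  | empty =>
    simp only [Finset.sum_empty]
    ext1
    case fst =>
      funext n
      rw [slsTbar_fst]
      refine finsum_eq_zero_of_forall_eq_zero fun j => ?_
      show B (j+1) * ((n + (j:ℤ) + 1) • (0:R)) + N (j+1) * (0:R) = 0
      simp
    case snd =>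
      funext n
      rw [slsTbar_snd]
      refine finsum_eq_zero_of_forall_eq_zero fun j => ?_
      show B (j+1) * ((n + (j:ℤ) + 1) • (0:R) + (-(j:ℚ)/2) • (0:R)) + N (j+1) * ((n + (j:ℤ) + 1) • (0:R)) = 0
      simp
  | insert a s hnotmem ih =>
    rw [Finset.sum_insert hnotmem, Finset.sum_insert hnotmem,
      tbar_add B N (h a (Finset.mem_insert_self a s))
        (Bdd.sum s f fun i hi => h i (Finset.mem_insert_of_mem hi)),
      ih fun i hi => h i (Finset.mem_insert_of_mem hi)]

end Full
/-! ### Binomial formula for iterates of `T̄` -/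

lemma Bdd.exp {M : ℤ} {u : SLS R} (B N : ℕ → R) (hu : Bdd M u) :
    Bdd M (slsExpBar B N u) := by
  constructor
  · intro n hn
    refine finsum_eq_zero_of_forall_eq_zero fun k => ?_
    rw [(hu.iter B N k).1 n (by omega), smul_zero]
  · intro n hn
    refine finsum_eq_zero_of_forall_eq_zero fun k => ?_
    rw [(hu.iter B N k).2 n (by omega), smul_zero]

lemma sum_comp1 {ι : Type*} (s : Finset ι) (f : ι → SLS R) (n : ℤ) :
    (∑ i ∈ s, f i).1 n = ∑ i ∈ s, (f i).1 n := by
  rw [Prod.fst_sum, Finset.sum_apply]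

lemma sum_comp2 {ι : Type*} (s : Finset ι) (f : ι → SLS R) (n : ℤ) :
    (∑ i ∈ s, f i).2 n = ∑ i ∈ s, (f i).2 n := by
  rw [Prod.snd_sum, Finset.sum_apply]

lemma coeff_eq {k i : ℕ} (h : i ≤ k) :
    (k.factorial : ℚ)⁻¹ * (k.choose i : ℚ)
      = (i.factorial : ℚ)⁻¹ * ((k - i).factorial : ℚ)⁻¹ := by
  have h1 : (k.factorial : ℚ) = (k.choose i : ℚ) * i.factorial * (k - i).factorial := by
    exact_mod_cast (Nat.choose_mul_factorial_mul_factorial h).symm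
  have h2 : (i.factorial : ℚ) ≠ 0 := Nat.cast_ne_zero.2 i.factorial_ne_zero
  have h3 : ((k - i).factorial : ℚ) ≠ 0 := Nat.cast_ne_zero.2 (k - i).factorial_ne_zero
  have h4 : (k.choose i : ℚ) ≠ 0 := Nat.cast_ne_zero.2 (Nat.choose_pos h).ne'
  rw [h1]
  field_simp

lemma binomial (σ : R →+* R) (hσ : ∀ r : R, σ (σ r) = r)
    (hcomm : ∀ u v : R, σ u = u → u * v = v * u)
    (hanti : ∀ u v : R, σ u = -u → σ v = -v → u * v = -(v * u))
    (B N : ℕ → R) (hB : ∀ j, σ (B j) = B j) (hN : ∀ j, σ (N j) = -(N j))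
    {Mu Mv : ℤ} (hMu : 0 ≤ Mu) (hMv : 0 ≤ Mv)
    {u v : SLS R} (hu : Bdd Mu u) (hv : Bdd Mv v) (n : ℕ) :
    (slsTbar B N)^[n] (slsMul σ u v)
      = ∑ i ∈ Finset.range (n+1), (n.choose i : ℚ) •
          slsMul σ ((slsTbar B N)^[i] u) ((slsTbar B N)^[n - i] v) := by
  induction n with
  | zero => simp
  | succ n ih =>
    have hbu : ∀ i : ℕ, Bdd Mu ((slsTbar B N)^[i] u) :=
      fun i => (hu.iter B N i).mono (by omega)
    have hbv : ∀ j : ℕ, Bdd Mv ((slsTbar B N)^[j] v) :=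
      fun j => (hv.iter B N j).mono (by omega)
    have hbA : ∀ i j : ℕ, Bdd (Mu + Mv) (slsMul σ ((slsTbar B N)^[i] u) ((slsTbar B N)^[j] v)) :=
      fun i j => Bdd.mul σ (hbu i) (hbv j)
    rw [Function.iterate_succ_apply', ih,
      tbar_sum B N (M := Mu + Mv) (Finset.range (n+1)) _
        (fun i _ => (hbA i (n - i)).qsmul _)]
    have e1 : ∀ i ∈ Finset.range (n+1),
        slsTbar B N ((n.choose i : ℚ) • slsMul σ ((slsTbar B N)^[i] u) ((slsTbar B N)^[n-i] v))
        = (n.choose i : ℚ) • slsMul σ ((slsTbar B N)^[i+1] u) ((slsTbar B N)^[n-i] v)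
          + (n.choose i : ℚ) • slsMul σ ((slsTbar B N)^[i] u) ((slsTbar B N)^[(n-i)+1] v) := by
      intro i _
      rw [tbar_qsmul B N (hbA i (n-i)),
        leibniz σ B N hσ hcomm hanti hB hN hMu hMv (hbu i) (hbv (n-i)),
        smul_add, ← Function.iterate_succ_apply' (slsTbar B N) i u,
        ← Function.iterate_succ_apply' (slsTbar B N) (n-i) v]
    rw [Finset.sum_congr rfl e1, Finset.sum_add_distrib]
    -- handle the target
    conv_rhs => rw [Finset.sum_range_succ']
    have e2 : ∀ i ∈ Finset.range (n+1),
        ((n+1).choose (i+1) : ℚ) • slsMul σ ((slsTbar B N)^[i+1] u) ((slsTbar B N)^[n+1-(i+1)] v)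
        = (n.choose i : ℚ) • slsMul σ ((slsTbar B N)^[i+1] u) ((slsTbar B N)^[n-i] v)
          + (n.choose (i+1) : ℚ) • slsMul σ ((slsTbar B N)^[i+1] u) ((slsTbar B N)^[n-i] v) := by
      intro i _
      rw [show n+1-(i+1) = n-i from by omega, Nat.choose_succ_succ, Nat.cast_add, add_smul]
    rw [Finset.sum_congr rfl e2, Finset.sum_add_distrib, add_assoc]
    congr 1
    -- remains: second sums match
    conv_lhs => rw [Finset.sum_range_succ']
    have e3 : ∀ i ∈ Finset.range n,
        (n.choose (i+1) : ℚ) • slsMul σ ((slsTbar B N)^[i+1] u) ((slsTbar B N)^[(n-(i+1))+1] v)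
        = (n.choose (i+1) : ℚ) • slsMul σ ((slsTbar B N)^[i+1] u) ((slsTbar B N)^[n-i] v) := by
      intro i hi
      rw [show (n-(i+1))+1 = n-i from by
        have := Finset.mem_range.mp hi; omega]
    rw [Finset.sum_congr rfl e3]
    have e4 : ∑ i ∈ Finset.range (n+1),
        (n.choose (i+1) : ℚ) • slsMul σ ((slsTbar B N)^[i+1] u) ((slsTbar B N)^[n-i] v)
        = ∑ i ∈ Finset.range n,
          (n.choose (i+1) : ℚ) • slsMul σ ((slsTbar B N)^[i+1] u) ((slsTbar B N)^[n-i] v) := by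
      rw [Finset.sum_range_succ, Nat.choose_succ_self, Nat.cast_zero, zero_smul, add_zero]
    rw [e4]
    congr 1
    rw [show n - 0 + 1 = n + 1 - 0 from by omega, Nat.choose_zero_right,
      Nat.choose_zero_right]
/-! ### Expansion of a convolution of exponentials into a double sum -/

lemma conv_expand (n : ℤ) (t : Finset ℤ) (K : ℕ) (E F : ℤ → R) (X Y : ℕ → ℤ → R)
    (hwin : ∀ k, E k * F (n - k) ≠ 0 → k ∈ t)
    (hE : ∀ k ∈ t, E k = ∑ i ∈ Finset.range K, (i.factorial : ℚ)⁻¹ • X i k)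
    (hF : ∀ k ∈ t, F (n - k) = ∑ j ∈ Finset.range K, (j.factorial : ℚ)⁻¹ • Y j (n - k))
    (hXY : ∀ i j k, X i k * Y j (n - k) ≠ 0 → k ∈ t) :
    conv E F n = ∑ i ∈ Finset.range K, ∑ j ∈ Finset.range K,
      ((i.factorial : ℚ)⁻¹ * (j.factorial : ℚ)⁻¹) • conv (X i) (Y j) n := by
  rw [show conv E F n = ∑ᶠ k : ℤ, E k * F (n - k) from rfl, fsum_eq_sum _ t hwin]
  have e1 : ∀ k ∈ t, E k * F (n - k)
      = ∑ i ∈ Finset.range K, ∑ j ∈ Finset.range K,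
        ((i.factorial : ℚ)⁻¹ * (j.factorial : ℚ)⁻¹) • (X i k * Y j (n - k)) := by
    intro k hk
    rw [hE k hk, hF k hk, Finset.sum_mul_sum]
    exact Finset.sum_congr rfl fun i _ => Finset.sum_congr rfl fun j _ => by
      rw [smul_mul_assoc, mul_smul_comm, smul_smul]
  rw [Finset.sum_congr rfl e1, Finset.sum_comm]
  refine Finset.sum_congr rfl fun i _ => ?_
  rw [Finset.sum_comm]
  refine Finset.sum_congr rfl fun j _ => ?_
  rw [← Finset.smul_sum]
  congr 1
  exact (fsum_eq_sum _ t (hXY i j)).symm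

/-! ### The main theorem -/

theorem statement4'
    (σ : R →+* R) (hσ : ∀ r : R, σ (σ r) = r)
    (hcomm : ∀ u v : R, σ u = u → u * v = v * u)
    (hanti : ∀ u v : R, σ u = -u → σ v = -v → u * v = -(v * u))
    (B N : ℕ → R) (hB : ∀ j, σ (B j) = B j) (hN : ∀ j, σ (N j) = -(N j))
    (u v : SLS R)
    (hu1 : SuppBddAbove u.1) (hu2 : SuppBddAbove u.2)
    (hv1 : SuppBddAbove v.1) (hv2 : SuppBddAbove v.2) :
    slsExpBar B N (slsMul σ u v) = slsMul σ (slsExpBar B N u) (slsExpBar B N v) := by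
  obtain ⟨Mu, hMu0, hu⟩ := exists_bdd hu1 hu2
  obtain ⟨Mv, hMv0, hv⟩ := exists_bdd hv1 hv2
  have hP : Bdd (Mu + Mv) (slsMul σ u v) := Bdd.mul σ hu hv
  have hbu : ∀ i : ℕ, Bdd (Mu - i) ((slsTbar B N)^[i] u) := hu.iter B N
  have hbv : ∀ j : ℕ, Bdd (Mv - j) ((slsTbar B N)^[j] v) := hv.iter B N
  have hEu : Bdd Mu (slsExpBar B N u) := hu.exp B N
  have hEv : Bdd Mv (slsExpBar B N v) := hv.exp B N
  have hbin := binomial σ hσ hcomm hanti B N hB hN hMu0 hMv0 hu hv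
  ext1
  case fst =>
    funext n
    set K : ℕ := (Mu + Mv - 2*n).toNat + (Mu + 2*Mv - 2*n).toNat
      + (Mv + 2*Mu - 2*n).toNat + 1 with hK
    set t : Finset ℤ := Finset.Icc (n - Mv) Mu with ht
    -- LHS
    have hL : (slsExpBar B N (slsMul σ u v)).1 n
        = ∑ i ∈ Finset.range K, ∑ j ∈ Finset.range K,
          ((i.factorial : ℚ)⁻¹ * (j.factorial : ℚ)⁻¹) •
            (slsMul σ ((slsTbar B N)^[i] u) ((slsTbar B N)^[j] v)).1 n := by
      show (∑ᶠ k : ℕ, (k.factorial : ℚ)⁻¹ • ((slsTbar B N)^[k] (slsMul σ u v)).1 n) = _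
      rw [fsum_eq_sum _ (Finset.range K) (fun k hk => Finset.mem_range.2 (by
        by_contra hc
        exact hk (by rw [(hP.iter B N k).1 n (by omega), smul_zero])))]
      have e1 : ∀ k ∈ Finset.range K, (k.factorial : ℚ)⁻¹ • ((slsTbar B N)^[k] (slsMul σ u v)).1 n
          = ∑ i ∈ Finset.range (k+1), ((i.factorial : ℚ)⁻¹ * ((k-i).factorial : ℚ)⁻¹) •
              (slsMul σ ((slsTbar B N)^[i] u) ((slsTbar B N)^[k-i] v)).1 n := by
        intro k _
        rw [hbin k, sum_comp1, Finset.smul_sum]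
        refine Finset.sum_congr rfl fun i hi => ?_
        have : ((k.choose i : ℚ) • slsMul σ ((slsTbar B N)^[i] u) ((slsTbar B N)^[k-i] v)).1 n
            = (k.choose i : ℚ) •
              (slsMul σ ((slsTbar B N)^[i] u) ((slsTbar B N)^[k-i] v)).1 n := rfl
        rw [this, smul_smul, coeff_eq (by simpa using Nat.lt_succ_iff.mp (Finset.mem_range.mp hi))]
      rw [Finset.sum_congr rfl e1, Finset.sum_range_diag_flip K
        (fun i j => ((i.factorial : ℚ)⁻¹ * (j.factorial : ℚ)⁻¹) •
          (slsMul σ ((slsTbar B N)^[i] u) ((slsTbar B N)^[j] v)).1 n)]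
      refine Finset.sum_congr rfl fun m hm => ?_
      refine Finset.sum_subset (Finset.range_subset_range.2 (by omega)) ?_
      intro j hj hnot
      rw [(Bdd.mul σ (hbu m) (hbv j)).1 n (by
        simp only [Finset.mem_range] at hj hnot
        omega), smul_zero]
    -- RHS
    have hR : conv (slsExpBar B N u).1 (slsExpBar B N v).1 n
        = ∑ i ∈ Finset.range K, ∑ j ∈ Finset.range K,
          ((i.factorial : ℚ)⁻¹ * (j.factorial : ℚ)⁻¹) •
            conv ((slsTbar B N)^[i] u).1 ((slsTbar B N)^[j] v).1 n := by
      refine conv_expand n t K _ _ _ _ ?_ ?_ ?_ ?_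
      · intro k hk
        by_contra hc
        simp only [ht, Finset.mem_Icc, not_and_or, not_le] at hc
        rcases hc with hc | hc
        · exact hk (by rw [hEv.1 (n - k) (by omega), mul_zero])
        · exact hk (by rw [hEu.1 k (by omega), zero_mul])
      · intro k hk
        simp only [ht, Finset.mem_Icc] at hk
        exact fsum_eq_sum _ _ (fun i hi => Finset.mem_range.2 (by
          by_contra hc
          exact hi (by rw [(hbu i).1 k (by omega), smul_zero])))
      · intro k hk
        simp only [ht, Finset.mem_Icc] at hk
        exact fsum_eq_sum _ _ (fun j hj => Finset.mem_range.2 (by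
          by_contra hc
          exact hj (by rw [(hbv j).1 (n - k) (by omega), smul_zero])))
      · intro i j k hk
        simp only [ht, Finset.mem_Icc]
        constructor
        · by_contra hc
          exact hk (by rw [(hbv j).1 (n - k) (by omega), mul_zero])
        · by_contra hc
          exact hk (by rw [(hbu i).1 k (by omega), zero_mul])
    show (slsExpBar B N (slsMul σ u v)).1 n
        = conv (slsExpBar B N u).1 (slsExpBar B N v).1 n
    rw [hL, hR]
    rfl
  case snd =>
    funext n
    set K : ℕ := (Mu + Mv - 2*n).toNat + (Mu + 2*Mv - 2*n).toNat
      + (Mv + 2*Mu - 2*n).toNat + 1 with hK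
    set t : Finset ℤ := Finset.Icc (n - Mv) Mu with ht
    have hL : (slsExpBar B N (slsMul σ u v)).2 n
        = ∑ i ∈ Finset.range K, ∑ j ∈ Finset.range K,
          ((i.factorial : ℚ)⁻¹ * (j.factorial : ℚ)⁻¹) •
            (slsMul σ ((slsTbar B N)^[i] u) ((slsTbar B N)^[j] v)).2 n := by
      show (∑ᶠ k : ℕ, (k.factorial : ℚ)⁻¹ • ((slsTbar B N)^[k] (slsMul σ u v)).2 n) = _
      rw [fsum_eq_sum _ (Finset.range K) (fun k hk => Finset.mem_range.2 (by
        by_contra hc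
        exact hk (by rw [(hP.iter B N k).2 n (by omega), smul_zero])))]
      have e1 : ∀ k ∈ Finset.range K, (k.factorial : ℚ)⁻¹ • ((slsTbar B N)^[k] (slsMul σ u v)).2 n
          = ∑ i ∈ Finset.range (k+1), ((i.factorial : ℚ)⁻¹ * ((k-i).factorial : ℚ)⁻¹) •
              (slsMul σ ((slsTbar B N)^[i] u) ((slsTbar B N)^[k-i] v)).2 n := by
        intro k _
        rw [hbin k, sum_comp2, Finset.smul_sum]
        refine Finset.sum_congr rfl fun i hi => ?_
        have : ((k.choose i : ℚ) • slsMul σ ((slsTbar B N)^[i] u) ((slsTbar B N)^[k-i] v)).2 n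
            = (k.choose i : ℚ) •
              (slsMul σ ((slsTbar B N)^[i] u) ((slsTbar B N)^[k-i] v)).2 n := rfl
        rw [this, smul_smul, coeff_eq (by simpa using Nat.lt_succ_iff.mp (Finset.mem_range.mp hi))]
      rw [Finset.sum_congr rfl e1, Finset.sum_range_diag_flip K
        (fun i j => ((i.factorial : ℚ)⁻¹ * (j.factorial : ℚ)⁻¹) •
          (slsMul σ ((slsTbar B N)^[i] u) ((slsTbar B N)^[j] v)).2 n)]
      refine Finset.sum_congr rfl fun m hm => ?_
      refine Finset.sum_subset (Finset.range_subset_range.2 (by omega)) ?_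
      intro j hj hnot
      rw [(Bdd.mul σ (hbu m) (hbv j)).2 n (by
        simp only [Finset.mem_range] at hj hnot
        omega), smul_zero]
    have hRa : conv (fun k => σ ((slsExpBar B N u).1 k)) (slsExpBar B N v).2 n
        = ∑ i ∈ Finset.range K, ∑ j ∈ Finset.range K,
          ((i.factorial : ℚ)⁻¹ * (j.factorial : ℚ)⁻¹) •
            conv (fun k => σ (((slsTbar B N)^[i] u).1 k)) ((slsTbar B N)^[j] v).2 n := by
      refine conv_expand n t K _ _ _ _ ?_ ?_ ?_ ?_
      · intro k hk
        by_contra hc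
        simp only [ht, Finset.mem_Icc, not_and_or, not_le] at hc
        rcases hc with hc | hc
        · exact hk (by rw [hEv.2 (n - k) (by omega), mul_zero])
        · exact hk (by rw [hEu.1 k (by omega), map_zero, zero_mul])
      · intro k hk
        simp only [ht, Finset.mem_Icc] at hk
        have e : (slsExpBar B N u).1 k
            = ∑ i ∈ Finset.range K, (i.factorial : ℚ)⁻¹ • ((slsTbar B N)^[i] u).1 k :=
          fsum_eq_sum _ _ (fun i hi => Finset.mem_range.2 (by
            by_contra hc
            exact hi (by rw [(hbu i).1 k (by omega), smul_zero])))
        rw [e, map_sum]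
        exact Finset.sum_congr rfl fun i _ => sigma_qsmul σ _ _
      · intro k hk
        simp only [ht, Finset.mem_Icc] at hk
        exact fsum_eq_sum _ _ (fun j hj => Finset.mem_range.2 (by
          by_contra hc
          exact hj (by rw [(hbv j).2 (n - k) (by omega), smul_zero])))
      · intro i j k hk
        simp only [ht, Finset.mem_Icc]
        constructor
        · by_contra hc
          exact hk (by rw [(hbv j).2 (n - k) (by omega), mul_zero])
        · by_contra hc
          exact hk (by rw [(hbu i).1 k (by omega), map_zero, zero_mul])
    have hRb : conv (slsExpBar B N u).2 (slsExpBar B N v).1 n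
        = ∑ i ∈ Finset.range K, ∑ j ∈ Finset.range K,
          ((i.factorial : ℚ)⁻¹ * (j.factorial : ℚ)⁻¹) •
            conv ((slsTbar B N)^[i] u).2 ((slsTbar B N)^[j] v).1 n := by
      refine conv_expand n t K _ _ _ _ ?_ ?_ ?_ ?_
      · intro k hk
        by_contra hc
        simp only [ht, Finset.mem_Icc, not_and_or, not_le] at hc
        rcases hc with hc | hc
        · exact hk (by rw [hEv.1 (n - k) (by omega), mul_zero])
        · exact hk (by rw [hEu.2 k (by omega), zero_mul])
      · intro k hk
        simp only [ht, Finset.mem_Icc] at hk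
        exact fsum_eq_sum _ _ (fun i hi => Finset.mem_range.2 (by
          by_contra hc
          exact hi (by rw [(hbu i).2 k (by omega), smul_zero])))
      · intro k hk
        simp only [ht, Finset.mem_Icc] at hk
        exact fsum_eq_sum _ _ (fun j hj => Finset.mem_range.2 (by
          by_contra hc
          exact hj (by rw [(hbv j).1 (n - k) (by omega), smul_zero])))
      · intro i j k hk
        simp only [ht, Finset.mem_Icc]
        constructor
        · by_contra hc
          exact hk (by rw [(hbv j).1 (n - k) (by omega), mul_zero])
        · by_contra hc
          exact hk (by rw [(hbu i).2 k (by omega), zero_mul])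
    show (slsExpBar B N (slsMul σ u v)).2 n
        = conv (fun k => σ ((slsExpBar B N u).1 k)) (slsExpBar B N v).2 n
          + conv (slsExpBar B N u).2 (slsExpBar B N v).1 n
    rw [hL, hRa, hRb, ← Finset.sum_add_distrib]
    refine Finset.sum_congr rfl fun i _ => ?_
    rw [← Finset.sum_add_distrib]
    refine Finset.sum_congr rfl fun j _ => ?_
    rw [← smul_add]
    rfl

/-- automorphism property for `exp(T̄)` on `R((x⁻¹))[φ]`, with the formal
variable `y` set equal to `1`: `exp(T̄)(uv) = exp(T̄)(u)·exp(T̄)(v)` for all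
`u, v ∈ R((x⁻¹))[φ]`. -/
theorem statement4
    (σ : R →+* R) (hσ : ∀ r : R, σ (σ r) = r)
    (hcomm : ∀ u v : R, σ u = u → u * v = v * u)
    (hanti : ∀ u v : R, σ u = -u → σ v = -v → u * v = -(v * u))
    (B N : ℕ → R) (hB : ∀ j, σ (B j) = B j) (hN : ∀ j, σ (N j) = -(N j))
    (u v : SLS R)
    (hu1 : SuppBddAbove u.1) (hu2 : SuppBddAbove u.2)
    (hv1 : SuppBddAbove v.1) (hv2 : SuppBddAbove v.2) :
    slsExpBar B N (slsMul σ u v) = slsMul σ (slsExpBar B N u) (slsExpBar B N v) :=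
  statement4' σ hσ hcomm hanti B N hB hN u v hu1 hu2 hv1 hv2

end
end
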